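/- arXiv:math/0508438 — 7 statements merged into one kernel-verified Lean document; each statement's English description precedes it below -/
import Mathlib

section
/- For all i, j ∈ ℤ, the wedging and contracting operators on full fermionic Fock space satisfy the Clifford algebra relations: ψ_i ψ_j* + ψ_j* ψ_i = δ_{ij}·id, ψ_i ψ_j + ψ_j ψ_i = 0, and ψ_i* ψ_j* + ψ_j* ψ_i* = 0 (as linear operators on F). -/
open Finsupp

/-- A semi-infinite monomial: a strictly decreasing sequence `seq : ℕ → ℤ` such that
for some `m : ℤ` (its charge) one has `seq k = m - k` for all sufficiently large `k`. -/
structure SIM : Type where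
  seq : ℕ → ℤ
  anti : StrictAnti seq
  ex_charge : ∃ m : ℤ, ∃ N : ℕ, ∀ k, N ≤ k → seq k = m - (k : ℤ)

/-- Full fermionic Fock space: the free `ℂ`-vector space on the set of all
semi-infinite monomials. -/
abbrev FockF : Type := SIM →₀ ℂ

namespace SIM

/-- `φ` is a semi-infinite monomial of charge `m`. -/
def HasCharge (φ : SIM) (m : ℤ) : Prop := ∃ N : ℕ, ∀ k, N ≤ k → φ.seq k = m - (k : ℤ)

theorem exists_lt (φ : SIM) (j : ℤ) : ∃ n : ℕ, φ.seq n < j := by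
  obtain ⟨m, N, hN⟩ := φ.ex_charge
  refine ⟨N + (m - j).toNat + 1, ?_⟩
  have h1 := hN (N + (m - j).toNat + 1) (by omega)
  omega

/-- The position at which `j` is inserted into `φ`: the least `n` with `φ.seq n < j`.
If `i_s > j > i_{s+1}` this equals `s + 1`, and it equals `0` if `j > i_0`. -/
noncomputable def wedgePos (φ : SIM) (j : ℤ) : ℕ := Nat.find (φ.exists_lt j)

/-- The semi-infinite monomial obtained from `φ` by inserting `j` (assuming `j` does not
occur in `φ`). -/
noncomputable def insertSIM (φ : SIM) (j : ℤ) (hj : ∀ s, φ.seq s ≠ j) : SIM where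
  seq k := if k < φ.wedgePos j then φ.seq k else if k = φ.wedgePos j then j else φ.seq (k - 1)
  anti := by
    have hs : φ.seq (φ.wedgePos j) < j := Nat.find_spec (φ.exists_lt j)
    have hm : ∀ k, k < φ.wedgePos j → j < φ.seq k := by
      intro k hk
      have h1 := Nat.find_min (φ.exists_lt j) hk
      have h2 := hj k
      omega
    have ha : ∀ a b : ℕ, a < b → φ.seq b < φ.seq a := fun a b h => φ.anti h
    apply strictAnti_nat_of_succ_lt
    intro k
    try dsimp only
    rcases lt_trichotomy k (φ.wedgePos j) with hk | hk | hk
    · rcases Nat.lt_or_ge (k + 1) (φ.wedgePos j) with hk1 | hk1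
      · rw [if_pos hk, if_pos hk1]
        exact ha k (k + 1) (by omega)
      · have hk1' : k + 1 = φ.wedgePos j := by omega
        rw [if_pos hk, if_neg (by omega), if_pos hk1']
        exact hm k hk
    · rw [if_neg (by omega), if_neg (by omega), if_neg (by omega), if_pos hk,
        (by omega : k + 1 - 1 = k), hk]
      exact hs
    · rw [if_neg (by omega), if_neg (by omega), if_neg (by omega), if_neg (by omega),
        (by omega : k + 1 - 1 = k)]
      exact ha (k - 1) k (by omega)
  ex_charge := by
    obtain ⟨m, N, hN⟩ := φ.ex_charge
    refine ⟨m + 1, N + φ.wedgePos j + 1, fun k hk => ?_⟩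
    try dsimp only
    rw [if_neg (by omega), if_neg (by omega)]
    have h3 := hN (k - 1) (by omega)
    omega

/-- The semi-infinite monomial obtained from `φ` by deleting the entry in position `s`. -/
noncomputable def removeSIM (φ : SIM) (s : ℕ) : SIM where
  seq k := if k < s then φ.seq k else φ.seq (k + 1)
  anti := by
    apply strictAnti_nat_of_succ_lt
    intro k
    try dsimp only
    split_ifs <;> exact φ.anti (by omega)
  ex_charge := by
    obtain ⟨m, N, hN⟩ := φ.ex_charge
    refine ⟨m - 1, N + s, fun k hk => ?_⟩
    try dsimp only
    rw [if_neg (by omega)]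
    have h3 := hN (k + 1) (by omega)
    omega

end SIM

open Classical in
/-- The wedging operator `ψ_j` on full fermionic Fock space.  On a basis element
`φ = (i_0, i_1, ...)` it is `0` if `j = i_s` for some `s`, and otherwise it is
`(-1)^n` times the basis element obtained by inserting `j` in position `n`
(so `(-1)^{s+1}` when `i_s > j > i_{s+1}`, and `+1` when `j > i_0`). -/
noncomputable def psi (j : ℤ) : FockF →ₗ[ℂ] FockF :=
  Finsupp.lift FockF ℂ SIM fun φ =>
    if hj : ∀ s, φ.seq s ≠ j then
      ((-1 : ℂ) ^ (φ.wedgePos j)) • Finsupp.single (φ.insertSIM j hj) 1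
    else 0

open Classical in
/-- The contracting operator `ψ_j^*` on full fermionic Fock space.  On a basis element
`φ = (i_0, i_1, ...)` it is `0` if `j ≠ i_s` for all `s`, and `(-1)^s` times the basis
element obtained by deleting `i_s` if `j = i_s`. -/
noncomputable def psiStar (j : ℤ) : FockF →ₗ[ℂ] FockF :=
  Finsupp.lift FockF ℂ SIM fun φ =>
    if hj : ∃ s, φ.seq s = j then
      ((-1 : ℂ) ^ hj.choose) • Finsupp.single (φ.removeSIM hj.choose) 1
    else 0

/-! A semi-infinite monomial is determined by its set of entries `S`, since the entry in
position `k` is the one with exactly `k` entries above it. Hence `ψ_j` and `ψ_j^*` act on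
basis vectors by `S ↦ S ∪ {j}` and `S ↦ S \ {j}` with the sign `(-1) ^ #{x ∈ S | j < x}`.
In each anticommutator both composites reach the same monomial, and adding or removing `i`
changes the count above `j` by `1` exactly when `j < i`. For `i ≠ j` exactly one of `i < j`,
`j < i` holds, so the two signs are opposite; for `i = j` only one composite survives and its
sign is a square. -/

open Set

theorem Set.notMem_range_iff_forall_ne {ι α : Type*} {f : ι → α} {a : α} :
    a ∉ range f ↔ ∀ i, f i ≠ a := by
  simp

theorem StrictAnti.range_inter_Ioi_eq_image {α : Type*} [LinearOrder α] {f : ℕ → α}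
    (hf : StrictAnti f) {x : α} {n : ℕ} (hlt : ∀ k < n, x < f k) (hle : f n ≤ x) :
    range f ∩ Ioi x = f '' Iio n := by
  ext y
  simp only [mem_inter_iff, mem_range, mem_Ioi, mem_image, mem_Iio]
  constructor
  · rintro ⟨⟨k, rfl⟩, hk⟩
    exact ⟨k, lt_of_not_ge fun h => (hf.antitone h |>.trans hle).not_gt hk, rfl⟩
  · rintro ⟨k, hk, rfl⟩
    exact ⟨⟨k, rfl⟩, hlt k hk⟩

theorem StrictAnti.ncard_range_inter_Ioi {α : Type*} [LinearOrder α] {f : ℕ → α}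
    (hf : StrictAnti f) {x : α} {n : ℕ} (hlt : ∀ k < n, x < f k) (hle : f n ≤ x) :
    (range f ∩ Ioi x).ncard = n := by
  rw [hf.range_inter_Ioi_eq_image hlt hle, ncard_image_of_injective _ hf.injective,
    ncard_Iio_nat]

theorem Set.ncard_insert_inter_Ioi {α : Type*} [LinearOrder α] {s : Set α} {a x : α}
    (ha : a ∉ s) (hs : (s ∩ Ioi x).Finite) :
    (insert a s ∩ Ioi x).ncard = (s ∩ Ioi x).ncard + if x < a then 1 else 0 := by
  split_ifs with h
  · rw [insert_inter_of_mem (mem_Ioi.2 h), ncard_insert_of_notMem (fun h' => ha h'.1) hs]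
  · rw [insert_inter_of_notMem (t := Ioi x) h, add_zero]

theorem neg_one_pow_add_neg_one_pow_of_odd {R : Type*} [Ring R] {m n : ℕ} (h : Odd (m + n)) :
    (-1 : R) ^ m + (-1) ^ n = 0 := by
  rcases Nat.even_or_odd m with hm | hm
  · rw [hm.neg_one_pow, ((Nat.odd_add'.mp h).mpr hm).neg_one_pow, add_neg_cancel]
  · rw [hm.neg_one_pow, ((Nat.odd_add.mp h).mp hm).neg_one_pow, neg_add_cancel]

theorem neg_one_pow_smul_smul_add_eq_zero {R M : Type*} [Ring R] [AddCommGroup M] [Module R M]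
    {a b c d : ℕ} (h : Odd (a + b + (c + d))) (v : M) :
    (-1 : R) ^ a • (-1 : R) ^ b • v + (-1 : R) ^ c • (-1 : R) ^ d • v = 0 := by
  rw [smul_smul, smul_smul, ← add_smul, ← pow_add, ← pow_add,
    neg_one_pow_add_neg_one_pow_of_odd h, zero_smul]

theorem ite_lt_add_ite_lt_of_ne {α : Type*} [LinearOrder α] {a b : α} (hab : a ≠ b) :
    ((if a < b then 1 else 0) + if b < a then 1 else 0) = 1 := by
  rcases hab.lt_or_gt with h | h <;> simp [h, h.not_gt]

namespace SIM

noncomputable def countAbove (φ : SIM) (x : ℤ) : ℕ := (range φ.seq ∩ Ioi x).ncard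

theorem finite_range_inter_Ioi (φ : SIM) (x : ℤ) : (range φ.seq ∩ Ioi x).Finite := by
  obtain ⟨n, hn⟩ := φ.exists_lt x
  refine ((finite_Iio n).image φ.seq).subset ?_
  rintro _ ⟨⟨k, rfl⟩, hk⟩
  exact ⟨k, φ.anti.lt_iff_gt.mp (hn.trans hk), rfl⟩

theorem countAbove_seq (φ : SIM) (k : ℕ) : φ.countAbove (φ.seq k) = k :=
  φ.anti.ncard_range_inter_Ioi (fun _ h => φ.anti h) le_rfl

theorem countAbove_eq_wedgePos {φ : SIM} {j : ℤ} (hj : ∀ s, φ.seq s ≠ j) :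
    φ.countAbove j = φ.wedgePos j :=
  φ.anti.ncard_range_inter_Ioi
    (fun k hk => (not_lt.mp (Nat.find_min (φ.exists_lt j) hk)).lt_of_ne' (hj k))
    (Nat.find_spec (φ.exists_lt j)).le

theorem ext_range {φ ψ : SIM} (h : range φ.seq = range ψ.seq) : φ = ψ := by
  have hseq : φ.seq = ψ.seq := funext fun k => by
    obtain ⟨m, hm⟩ : φ.seq k ∈ range ψ.seq := h ▸ mem_range_self k
    have hmk : m = k := by
      rw [← ψ.countAbove_seq m, ← φ.countAbove_seq k, countAbove, countAbove, h, hm]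
    rw [← hm, hmk]
  cases φ; cases ψ; congr

theorem range_insertSIM (φ : SIM) (j : ℤ) (hj : ∀ s, φ.seq s ≠ j) :
    range (φ.insertSIM j hj).seq = insert j (range φ.seq) := by
  ext x
  constructor
  · rintro ⟨k, rfl⟩
    simp only [insertSIM]
    split_ifs
    exacts [Or.inr (mem_range_self _), Or.inl rfl, Or.inr (mem_range_self _)]
  · rintro (rfl | ⟨t, rfl⟩)
    · exact ⟨φ.wedgePos x, by simp [insertSIM]⟩
    · rcases Nat.lt_or_ge t (φ.wedgePos j) with ht | ht
      · exact ⟨t, by simp [insertSIM, ht]⟩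
      · exact ⟨t + 1, by simp [insertSIM]; omega⟩

theorem range_removeSIM (φ : SIM) (s : ℕ) :
    range (φ.removeSIM s).seq = range φ.seq \ {φ.seq s} := by
  ext x
  simp only [mem_sdiff, mem_range, mem_singleton_iff, removeSIM]
  constructor
  · rintro ⟨k, rfl⟩
    split_ifs with hk
    · exact ⟨⟨k, rfl⟩, fun h => by have := φ.anti.injective h; omega⟩
    · exact ⟨⟨k + 1, rfl⟩, fun h => by have := φ.anti.injective h; omega⟩
  · rintro ⟨⟨t, rfl⟩, ht⟩
    have hts : t ≠ s := fun h => ht (h ▸ rfl)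
    rcases Nat.lt_or_gt_of_ne hts with h | h
    · exact ⟨t, if_pos h⟩
    · exact ⟨t - 1, by rw [if_neg (by omega), Nat.sub_add_cancel (by omega)]⟩

noncomputable def eraseSIM (φ : SIM) (j : ℤ) (hj : j ∈ range φ.seq) : SIM :=
  φ.removeSIM hj.choose

theorem range_eraseSIM (φ : SIM) (j : ℤ) (hj : j ∈ range φ.seq) :
    range (φ.eraseSIM j hj).seq = range φ.seq \ {j} := by
  rw [eraseSIM, range_removeSIM, hj.choose_spec]

variable {φ : SIM} {i j x : ℤ}

theorem seq_insertSIM_ne (hi : ∀ s, φ.seq s ≠ i) (hij : i ≠ j) (hj : ∀ s, φ.seq s ≠ j) :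
    ∀ s, (φ.insertSIM j hj).seq s ≠ i := by
  rw [← notMem_range_iff_forall_ne, range_insertSIM, mem_insert_iff, not_or]
  exact ⟨hij, notMem_range_iff_forall_ne.2 hi⟩

theorem mem_range_insertSIM_self (hj : ∀ s, φ.seq s ≠ j) :
    j ∈ range (φ.insertSIM j hj).seq := by
  rw [range_insertSIM]
  exact mem_insert j _

theorem mem_range_insertSIM_of_mem (hx : x ∈ range φ.seq) (hj : ∀ s, φ.seq s ≠ j) :
    x ∈ range (φ.insertSIM j hj).seq := by
  rw [range_insertSIM]
  exact mem_insert_of_mem j hx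

theorem seq_eraseSIM_ne (hi : ∀ s, φ.seq s ≠ i) (hj : j ∈ range φ.seq) :
    ∀ s, (φ.eraseSIM j hj).seq s ≠ i := by
  rw [← notMem_range_iff_forall_ne, range_eraseSIM]
  exact fun h => notMem_range_iff_forall_ne.2 hi h.1

theorem seq_eraseSIM_ne_self (hj : j ∈ range φ.seq) : ∀ s, (φ.eraseSIM j hj).seq s ≠ j := by
  rw [← notMem_range_iff_forall_ne, range_eraseSIM]
  exact fun h => h.2 rfl

theorem mem_range_eraseSIM_of_mem (hx : x ∈ range φ.seq) (hxj : x ≠ j)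
    (hj : j ∈ range φ.seq) :
    x ∈ range (φ.eraseSIM j hj).seq := by
  rw [range_eraseSIM]
  exact ⟨hx, hxj⟩

theorem countAbove_insertSIM (hj : ∀ s, φ.seq s ≠ j) (x : ℤ) :
    (φ.insertSIM j hj).countAbove x = φ.countAbove x + if x < j then 1 else 0 := by
  rw [countAbove, range_insertSIM]
  exact ncard_insert_inter_Ioi (notMem_range_iff_forall_ne.2 hj) (φ.finite_range_inter_Ioi x)

theorem countAbove_eraseSIM (hj : j ∈ range φ.seq) (x : ℤ) :
    φ.countAbove x = (φ.eraseSIM j hj).countAbove x + if x < j then 1 else 0 := by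
  have h := ncard_insert_inter_Ioi (a := j) (x := x) (notMem_sdiff_of_mem (mem_singleton j))
    ((φ.finite_range_inter_Ioi x).subset (inter_subset_inter_left _ sdiff_subset))
  rwa [insert_sdiff_self_of_mem hj, ← range_eraseSIM φ j hj] at h

theorem insertSIM_comm (hij : i ≠ j) (hi : ∀ s, φ.seq s ≠ i) (hj : ∀ s, φ.seq s ≠ j) :
    (φ.insertSIM j hj).insertSIM i (seq_insertSIM_ne hi hij hj) =
      (φ.insertSIM i hi).insertSIM j (seq_insertSIM_ne hj hij.symm hi) :=
  ext_range (by simp only [range_insertSIM, insert_comm])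

theorem eraseSIM_comm (hij : i ≠ j) (hi : i ∈ range φ.seq) (hj : j ∈ range φ.seq) :
    (φ.eraseSIM j hj).eraseSIM i (mem_range_eraseSIM_of_mem hi hij hj) =
      (φ.eraseSIM i hi).eraseSIM j (mem_range_eraseSIM_of_mem hj hij.symm hi) :=
  ext_range (by simp only [range_eraseSIM, sdiff_sdiff_comm])

theorem insertSIM_eraseSIM_comm (hij : i ≠ j) (hi : ∀ s, φ.seq s ≠ i)
    (hj : j ∈ range φ.seq) :
    (φ.eraseSIM j hj).insertSIM i (seq_eraseSIM_ne hi hj) =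
      (φ.insertSIM i hi).eraseSIM j (mem_range_insertSIM_of_mem hj hi) :=
  ext_range (by rw [range_insertSIM, range_eraseSIM, range_eraseSIM, range_insertSIM,
    insert_sdiff_singleton_comm hij])

theorem insertSIM_eraseSIM_self (hj : j ∈ range φ.seq) :
    (φ.eraseSIM j hj).insertSIM j (seq_eraseSIM_ne_self hj) = φ :=
  ext_range (by rw [range_insertSIM, range_eraseSIM, insert_sdiff_self_of_mem hj])

theorem eraseSIM_insertSIM_self (hj : ∀ s, φ.seq s ≠ j) :
    (φ.insertSIM j hj).eraseSIM j (mem_range_insertSIM_self hj) = φ :=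
  ext_range (by rw [range_eraseSIM, range_insertSIM,
    insert_sdiff_self_of_notMem (notMem_range_iff_forall_ne.2 hj)])

end SIM

section Clifford

variable {φ : SIM} {i j : ℤ}

theorem psi_single_of_forall_ne (hj : ∀ s, φ.seq s ≠ j) :
    psi j (single φ 1) = (-1 : ℂ) ^ φ.countAbove j • single (φ.insertSIM j hj) 1 := by
  rw [psi, lift_apply, sum_single_index (by simp), one_smul, dif_pos hj,
    SIM.countAbove_eq_wedgePos hj]

theorem psi_single_of_mem (hj : j ∈ range φ.seq) : psi j (single φ 1) = 0 := by
  obtain ⟨s, hs⟩ := hj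
  rw [psi, lift_apply, sum_single_index (by simp), one_smul, dif_neg fun h => h s hs]

theorem psiStar_single_of_mem (hj : j ∈ range φ.seq) :
    psiStar j (single φ 1) = (-1 : ℂ) ^ φ.countAbove j • single (φ.eraseSIM j hj) 1 := by
  have hsign : φ.countAbove j = hj.choose := by
    simpa [hj.choose_spec] using φ.countAbove_seq hj.choose
  rw [psiStar, lift_apply, sum_single_index (by simp), one_smul, dif_pos (mem_range.1 hj), hsign]
  rfl

theorem psiStar_single_of_forall_ne (hj : ∀ s, φ.seq s ≠ j) : psiStar j (single φ 1) = 0 := by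
  rw [psiStar, lift_apply, sum_single_index (by simp), one_smul,
    dif_neg fun ⟨s, hs⟩ => hj s hs]

theorem psi_psi_single_of_mem (hi : i ∈ range φ.seq) (j : ℤ) :
    psi i (psi j (single φ 1)) = 0 := by
  by_cases hj : ∀ s, φ.seq s ≠ j
  · rw [psi_single_of_forall_ne hj, map_smul,
      psi_single_of_mem (SIM.mem_range_insertSIM_of_mem hi hj), smul_zero]
  · rw [psi_single_of_mem (not_forall_not.mp hj), map_zero]

theorem psiStar_psiStar_single_of_forall_ne (hi : ∀ s, φ.seq s ≠ i) (j : ℤ) :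
    psiStar i (psiStar j (single φ 1)) = 0 := by
  by_cases hj : j ∈ range φ.seq
  · rw [psiStar_single_of_mem hj, map_smul,
      psiStar_single_of_forall_ne (SIM.seq_eraseSIM_ne hi hj), smul_zero]
  · rw [psiStar_single_of_forall_ne (notMem_range_iff_forall_ne.1 hj), map_zero]

theorem psi_comp_psi_add_psi_comp_psi (i j : ℤ) :
    psi i ∘ₗ psi j + psi j ∘ₗ psi i = 0 := by
  ext φ : 2
  simp only [LinearMap.add_apply, LinearMap.comp_apply, lsingle_apply, LinearMap.zero_apply]
  by_cases hi : i ∈ range φ.seq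
  · rw [psi_psi_single_of_mem hi, psi_single_of_mem hi, map_zero, add_zero]
  by_cases hj : j ∈ range φ.seq
  · rw [psi_psi_single_of_mem hj, psi_single_of_mem hj, map_zero, zero_add]
  rw [notMem_range_iff_forall_ne] at hi hj
  rcases eq_or_ne i j with rfl | hij
  · rw [psi_single_of_forall_ne hi, map_smul,
      psi_single_of_mem (SIM.mem_range_insertSIM_self hi), smul_zero, add_zero]
  rw [psi_single_of_forall_ne hj, psi_single_of_forall_ne hi, map_smul, map_smul,
    psi_single_of_forall_ne (SIM.seq_insertSIM_ne hi hij hj),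
    psi_single_of_forall_ne (SIM.seq_insertSIM_ne hj hij.symm hi), SIM.insertSIM_comm hij hi hj]
  refine neg_one_pow_smul_smul_add_eq_zero ?_ _
  have := SIM.countAbove_insertSIM hj i
  have := SIM.countAbove_insertSIM hi j
  have := ite_lt_add_ite_lt_of_ne hij
  rw [Nat.odd_iff]
  omega

theorem psiStar_comp_psiStar_add_psiStar_comp_psiStar (i j : ℤ) :
    psiStar i ∘ₗ psiStar j + psiStar j ∘ₗ psiStar i = 0 := by
  ext φ : 2
  simp only [LinearMap.add_apply, LinearMap.comp_apply, lsingle_apply, LinearMap.zero_apply]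
  by_cases hi : ∀ s, φ.seq s ≠ i
  · rw [psiStar_psiStar_single_of_forall_ne hi, psiStar_single_of_forall_ne hi, map_zero, add_zero]
  by_cases hj : ∀ s, φ.seq s ≠ j
  · rw [psiStar_psiStar_single_of_forall_ne hj, psiStar_single_of_forall_ne hj, map_zero, zero_add]
  replace hi : i ∈ range φ.seq := not_forall_not.mp hi
  replace hj : j ∈ range φ.seq := not_forall_not.mp hj
  rcases eq_or_ne i j with rfl | hij
  · rw [psiStar_single_of_mem hi, map_smul,
      psiStar_single_of_forall_ne (SIM.seq_eraseSIM_ne_self hi), smul_zero, add_zero]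
  rw [psiStar_single_of_mem hj, psiStar_single_of_mem hi, map_smul, map_smul,
    psiStar_single_of_mem (SIM.mem_range_eraseSIM_of_mem hi hij hj),
    psiStar_single_of_mem (SIM.mem_range_eraseSIM_of_mem hj hij.symm hi),
    SIM.eraseSIM_comm hij hi hj]
  refine neg_one_pow_smul_smul_add_eq_zero ?_ _
  have := SIM.countAbove_eraseSIM hj i
  have := SIM.countAbove_eraseSIM hi j
  have := ite_lt_add_ite_lt_of_ne hij
  rw [Nat.odd_iff]
  omega

theorem psi_comp_psiStar_add_psiStar_comp_psi_self (j : ℤ) :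
    psi j ∘ₗ psiStar j + psiStar j ∘ₗ psi j = LinearMap.id := by
  ext φ : 2
  simp only [LinearMap.add_apply, LinearMap.comp_apply, lsingle_apply, LinearMap.id_apply]
  by_cases hj : j ∈ range φ.seq
  · rw [psi_single_of_mem hj, map_zero, add_zero, psiStar_single_of_mem hj, map_smul,
      psi_single_of_forall_ne (SIM.seq_eraseSIM_ne_self hj), SIM.insertSIM_eraseSIM_self,
      smul_smul, ← pow_add, SIM.countAbove_eraseSIM hj j, if_neg (lt_irrefl j), add_zero,
      Even.neg_one_pow ⟨_, rfl⟩, one_smul]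
  · rw [notMem_range_iff_forall_ne] at hj
    rw [psiStar_single_of_forall_ne hj, map_zero, zero_add, psi_single_of_forall_ne hj, map_smul,
      psiStar_single_of_mem (SIM.mem_range_insertSIM_self hj), SIM.eraseSIM_insertSIM_self,
      smul_smul, ← pow_add, SIM.countAbove_insertSIM, if_neg (lt_irrefl j), add_zero,
      Even.neg_one_pow ⟨_, rfl⟩, one_smul]

theorem psiStar_psi_single_of_forall_ne (hij : i ≠ j) (hj : ∀ s, φ.seq s ≠ j) :
    psiStar j (psi i (single φ 1)) = 0 := by
  by_cases hi : i ∈ range φ.seq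
  · rw [psi_single_of_mem hi, map_zero]
  · rw [notMem_range_iff_forall_ne] at hi
    rw [psi_single_of_forall_ne hi, map_smul,
      psiStar_single_of_forall_ne (SIM.seq_insertSIM_ne hj hij.symm hi), smul_zero]

theorem psi_psiStar_single_of_mem (hij : i ≠ j) (hi : i ∈ range φ.seq) :
    psi i (psiStar j (single φ 1)) = 0 := by
  by_cases hj : j ∈ range φ.seq
  · rw [psiStar_single_of_mem hj, map_smul,
      psi_single_of_mem (SIM.mem_range_eraseSIM_of_mem hi hij hj), smul_zero]
  · rw [psiStar_single_of_forall_ne (notMem_range_iff_forall_ne.1 hj), map_zero]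

theorem psi_comp_psiStar_add_psiStar_comp_psi_of_ne (hij : i ≠ j) :
    psi i ∘ₗ psiStar j + psiStar j ∘ₗ psi i = 0 := by
  ext φ : 2
  simp only [LinearMap.add_apply, LinearMap.comp_apply, lsingle_apply, LinearMap.zero_apply]
  by_cases hi : i ∈ range φ.seq
  · rw [psi_psiStar_single_of_mem hij hi, psi_single_of_mem hi, map_zero, add_zero]
  by_cases hj : ∀ s, φ.seq s ≠ j
  · rw [psiStar_psi_single_of_forall_ne hij hj, psiStar_single_of_forall_ne hj, map_zero,
      zero_add]
  rw [notMem_range_iff_forall_ne] at hi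
  replace hj : j ∈ range φ.seq := not_forall_not.mp hj
  rw [psiStar_single_of_mem hj, psi_single_of_forall_ne hi, map_smul, map_smul,
    psi_single_of_forall_ne (SIM.seq_eraseSIM_ne hi hj),
    psiStar_single_of_mem (SIM.mem_range_insertSIM_of_mem hj hi),
    SIM.insertSIM_eraseSIM_comm hij hi hj]
  refine neg_one_pow_smul_smul_add_eq_zero ?_ _
  have := SIM.countAbove_eraseSIM hj i
  have := SIM.countAbove_insertSIM hi j
  have := ite_lt_add_ite_lt_of_ne hij
  rw [Nat.odd_iff]
  omega

end Clifford

/-- the wedging and contracting operators satisfy the Clifford algebra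
relations `ψ_i ψ_j^* + ψ_j^* ψ_i = δ_{ij} id`, `ψ_i ψ_j + ψ_j ψ_i = 0` and
`ψ_i^* ψ_j^* + ψ_j^* ψ_i^* = 0` as linear operators on `F`. -/
theorem clifford_relations (i j : ℤ) :
    (psi i ∘ₗ psiStar j + psiStar j ∘ₗ psi i
      = if i = j then (LinearMap.id : FockF →ₗ[ℂ] FockF) else 0) ∧
    (psi i ∘ₗ psi j + psi j ∘ₗ psi i = 0) ∧
    (psiStar i ∘ₗ psiStar j + psiStar j ∘ₗ psiStar i = 0) := by
  refine ⟨?_, psi_comp_psi_add_psi_comp_psi i j,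
    psiStar_comp_psiStar_add_psiStar_comp_psiStar i j⟩
  split_ifs with hij
  · subst hij
    exact psi_comp_psiStar_add_psiStar_comp_psi_self i
  · exact psi_comp_psiStar_add_psiStar_comp_psi_of_ne hij
end

section
/- For every n ∈ ℤ and every semi-infinite monomial φ, all but finitely many terms of the defining sum of α_n vanish on φ: if n ≠ 0 then ψ_j ψ_{j+n}*(φ) = 0 for all but finitely many j ∈ ℤ, and ψ_j ψ_j*(φ) = 0 for all but finitely many j > 0 while ψ_j* ψ_j(φ) = 0 for all but finitely many j ≤ 0. Consequently the free bosons α_n φ = Σ_{j∈ℤ} ψ_j ψ_{j+n}*(φ) (n ≠ 0) and α_0 φ = Σ_{j>0} ψ_j ψ_j*(φ) − Σ_{j≤0} ψ_j* ψ_j(φ) are well-defined linear operators on F. -/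
open Finsupp

open Classical in
/-- The free bosons `α_n` on full fermionic Fock space, defined on each basis vector `φ` by
`α_n φ = Σ_{j ∈ ℤ} ψ_j ψ_{j+n}^*(φ)` for `n ≠ 0` and
`α_0 φ = Σ_{j > 0} ψ_j ψ_j^*(φ) − Σ_{j ≤ 0} ψ_j^* ψ_j(φ)` (all sums are finite). -/
noncomputable def alpha (n : ℤ) : FockF →ₗ[ℂ] FockF :=
  Finsupp.lift FockF ℂ SIM fun φ =>
    if n = 0 then
      (∑ᶠ (j : ℤ) (_ : 0 < j), psi j (psiStar j (Finsupp.single φ 1))) -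
        ∑ᶠ (j : ℤ) (_ : j ≤ 0), psiStar j (psi j (Finsupp.single φ 1))
    else ∑ᶠ j : ℤ, psi j (psiStar (j + n) (Finsupp.single φ 1))

/-!
A monomial `φ` of charge `m` with `φ.seq k = m - k` for `k ≥ N` contains every integer
`≤ m - N` and none above `φ.seq 0`. A nonzero term `ψ_j ψ_k^* φ` needs `k` in `φ` and, when
`j ≠ k`, `j` missing from `φ`; a nonzero `ψ_j^* ψ_j φ` needs `j` missing from `φ`. Either way
`j` is confined to a bounded interval.
-/

namespace SIM

theorem le_seq_zero_of_mem_range {φ : SIM} {j : ℤ} (h : j ∈ Set.range φ.seq) : j ≤ φ.seq 0 := by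
  obtain ⟨s, rfl⟩ := h
  exact φ.anti.antitone (Nat.zero_le s)

theorem exists_lt_of_notMem_range (φ : SIM) :
    ∃ b : ℤ, ∀ j, j ∉ Set.range φ.seq → b < j := by
  obtain ⟨m, N, hN⟩ := φ.ex_charge
  refine ⟨m - N, fun j hj => ?_⟩
  by_contra! hle
  exact hj ⟨(m - j).toNat, by rw [hN _ (by omega)]; omega⟩

theorem mem_range_removeSIM {φ : SIM} {s : ℕ} {j : ℤ} (hj : j ∈ Set.range φ.seq)
    (hne : j ≠ φ.seq s) : j ∈ Set.range (φ.removeSIM s).seq := by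
  obtain ⟨t, rfl⟩ := hj
  have hts : t ≠ s := fun h => hne (h ▸ rfl)
  rcases Nat.lt_or_gt_of_ne hts with hlt | hgt
  · exact ⟨t, if_pos hlt⟩
  · refine ⟨t - 1, ?_⟩
    change (if t - 1 < s then _ else _) = _
    rw [if_neg (by omega), Nat.sub_add_cancel (by omega)]

end SIM

theorem lift_single_one (f : SIM → FockF) (φ : SIM) :
    Finsupp.lift FockF ℂ SIM f (Finsupp.single φ 1) = f φ := by
  simp [Finsupp.lift_apply, Finsupp.sum_single_index]

theorem psi_single_eq_zero_of_mem {j : ℤ} {φ : SIM} (h : j ∈ Set.range φ.seq) :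
    psi j (Finsupp.single φ 1) = 0 := by
  rw [psi, lift_single_one, dif_neg (not_forall_not.mpr h)]

theorem psiStar_single_eq_zero_of_notMem {j : ℤ} {φ : SIM} (h : j ∉ Set.range φ.seq) :
    psiStar j (Finsupp.single φ 1) = 0 := by
  rw [psiStar, lift_single_one, dif_neg (show ¬∃ s, φ.seq s = j from h)]

theorem psiStar_single_of_seq_eq {j : ℤ} {φ : SIM} {s : ℕ} (h : φ.seq s = j) :
    psiStar j (Finsupp.single φ 1) = ((-1 : ℂ) ^ s) • Finsupp.single (φ.removeSIM s) 1 := by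
  have hex : ∃ s, φ.seq s = j := ⟨s, h⟩
  have hchoose : hex.choose = s := φ.anti.injective (hex.choose_spec.trans h.symm)
  rw [psiStar, lift_single_one, dif_pos hex, hchoose]

theorem notMem_of_psi_single_ne_zero {j : ℤ} {φ : SIM} (h : psi j (Finsupp.single φ 1) ≠ 0) :
    j ∉ Set.range φ.seq :=
  fun hj => h (psi_single_eq_zero_of_mem hj)

theorem mem_of_psiStar_single_ne_zero {j : ℤ} {φ : SIM}
    (h : psiStar j (Finsupp.single φ 1) ≠ 0) : j ∈ Set.range φ.seq := by
  by_contra hj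
  exact h (psiStar_single_eq_zero_of_notMem hj)

theorem mem_of_psi_psiStar_single_ne_zero {j k : ℤ} {φ : SIM}
    (h : psi j (psiStar k (Finsupp.single φ 1)) ≠ 0) : k ∈ Set.range φ.seq :=
  mem_of_psiStar_single_ne_zero fun h0 => h (by rw [h0, map_zero])

theorem notMem_of_psi_psiStar_single_ne_zero {j k : ℤ} {φ : SIM} (hjk : j ≠ k)
    (h : psi j (psiStar k (Finsupp.single φ 1)) ≠ 0) : j ∉ Set.range φ.seq := by
  obtain ⟨s, hs⟩ := mem_of_psi_psiStar_single_ne_zero h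
  intro hj
  rw [psiStar_single_of_seq_eq hs, map_smul,
    psi_single_eq_zero_of_mem (SIM.mem_range_removeSIM hj (hs ▸ hjk)), smul_zero] at h
  exact h rfl

/-- for every semi-infinite monomial `φ`, all but finitely many terms of the
defining sum of `α_n` vanish on `φ`; consequently the free bosons `α_n` are well-defined
linear operators on `F` given on basis elements by the indicated (finite) sums. -/
theorem alpha_well_defined (φ : SIM) :
    (∀ n : ℤ, n ≠ 0 → {j : ℤ | psi j (psiStar (j + n) (Finsupp.single φ 1)) ≠ 0}.Finite) ∧
    {j : ℤ | 0 < j ∧ psi j (psiStar j (Finsupp.single φ 1)) ≠ 0}.Finite ∧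
    {j : ℤ | j ≤ 0 ∧ psiStar j (psi j (Finsupp.single φ 1)) ≠ 0}.Finite ∧
    (∀ n : ℤ, n ≠ 0 →
      alpha n (Finsupp.single φ 1) = ∑ᶠ j : ℤ, psi j (psiStar (j + n) (Finsupp.single φ 1))) ∧
    alpha 0 (Finsupp.single φ 1) =
      (∑ᶠ (j : ℤ) (_ : 0 < j), psi j (psiStar j (Finsupp.single φ 1))) -
        ∑ᶠ (j : ℤ) (_ : j ≤ 0), psiStar j (psi j (Finsupp.single φ 1)) := by
  obtain ⟨b, hb⟩ := φ.exists_lt_of_notMem_range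
  refine ⟨fun n hn => ?_, ?_, ?_, fun n hn => ?_, ?_⟩
  · refine (Set.finite_Ioc b (φ.seq 0 - n)).subset fun j hj => ?_
    have hjn : j ≠ j + n := by omega
    have htop := SIM.le_seq_zero_of_mem_range (mem_of_psi_psiStar_single_ne_zero hj)
    exact ⟨hb j (notMem_of_psi_psiStar_single_ne_zero hjn hj), by omega⟩
  · refine (Set.finite_Ioc 0 (φ.seq 0)).subset fun j ⟨hj0, hj⟩ => ?_
    exact ⟨hj0, SIM.le_seq_zero_of_mem_range (mem_of_psi_psiStar_single_ne_zero hj)⟩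
  · refine (Set.finite_Ioc b 0).subset fun j ⟨hj0, hj⟩ => ?_
    have hpsi : psi j (Finsupp.single φ 1) ≠ 0 := fun h0 => hj (by rw [h0, map_zero])
    exact ⟨hb j (notMem_of_psi_single_ne_zero hpsi), hj0⟩
  · rw [alpha, lift_single_one, if_neg hn]
  · rw [alpha, lift_single_one, if_pos rfl]
end

section
/- The free bosons satisfy the oscillator (Heisenberg) commutation relations on F: for all m, n ∈ ℤ, [α_m, α_n] = m δ_{m,−n}·id_F. In particular, the map s_n ↦ α_n, K ↦ id defines a representation of the oscillator algebra on F (Proposition 14.9 of Kac, first part). -/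
open Finsupp

/-!
On a basis vector `φ` that agrees with the vacuum outside `[-R, R]`, only the modes in
`S = [-K, K]` contribute to `α_n φ` once `K ≥ R + |n|`: there `α_n` is the finite sum
`A_n = Σ_{j ∈ S} ψ_j ψ_{j+n}^*`, minus the scalar `K + 1` when `n = 0`, and `α_n φ` agrees
with the vacuum outside `[-R - |n|, R + |n|]`. Hence `[α_m, α_n] φ = [A_m, A_n] φ` for `K`
large.

The signs of `ψ_j` and `ψ_j^*` on `φ` are both `(-1)^#{entries of φ above j}`, which turns the
canonical anticommutation relations into parity counts. They give
`[ψ_j ψ_a^*, ψ_k ψ_b^*] = δ_{ka} ψ_j ψ_b^* - δ_{jb} ψ_k ψ_a^*`, and summing,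
`[A_m, A_n] = Σ_{j, j+m ∈ S} ψ_j ψ_{j+m+n}^* - Σ_{j, j+n ∈ S} ψ_j ψ_{j+m+n}^*`.
If `m + n ≠ 0`, every term that is non-zero on `φ` has `j + m, j + n ∈ S`, so the two sums
cancel.
If `m + n = 0`, then `ψ_j ψ_j^* φ = [j ∈ φ] φ` and the two sums count the entries of `φ` in
`[-K, K - m]` and in `[-K + m, K]`: the first window has the `m` extra places just above `-K`,
all occupied, the second the `m` extra places just below `K`, all empty.
-/

theorem mul_mul_sub_mul_mul_of_anticomm {R : Type*} [Ring R] {a b c d : R}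
    (hac : a * c + c * a = 0) (hbd : b * d + d * b = 0) :
    a * b * (c * d) - c * d * (a * b) = a * (b * c + c * b) * d - c * (a * d + d * a) * b := by
  have key : a * c * (b * d) = c * a * (d * b) := by
    rw [eq_neg_of_add_eq_zero_left hac, eq_neg_of_add_eq_zero_left hbd, neg_mul_neg]
  have h : a * b * (c * d) - c * d * (a * b) - (a * (b * c + c * b) * d - c * (a * d + d * a) * b)
      = c * a * (d * b) - a * c * (b * d) := by
    noncomm_ring
  rwa [key, sub_self, sub_eq_zero] at h

namespace SIM

instance : Membership ℤ SIM := ⟨fun φ j => ∃ s, φ.seq s = j⟩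

variable {φ : SIM} {i j : ℤ}

theorem mem_iff : j ∈ φ ↔ ∃ s, φ.seq s = j := Iff.rfl

theorem notMem_iff : j ∉ φ ↔ ∀ s, φ.seq s ≠ j := by
  simp [mem_iff]

theorem seq_mem (φ : SIM) (s : ℕ) : φ.seq s ∈ φ := ⟨s, rfl⟩

theorem le_seq_zero_of_mem (h : j ∈ φ) : j ≤ φ.seq 0 := by
  obtain ⟨s, rfl⟩ := h
  exact φ.anti.antitone (Nat.zero_le s)

theorem ext_of_mem {ψ : SIM} (h : ∀ j, j ∈ φ ↔ j ∈ ψ) : φ = ψ := by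
  have : φ.seq = ψ.seq :=
    funext (congrFun ((φ.anti.dual_right.range_inj ψ.anti.dual_right).1 (Set.ext h)))
  cases φ; cases ψ; cases this; rfl

theorem mem_insertSIM (hj : ∀ s, φ.seq s ≠ j) :
    i ∈ φ.insertSIM j hj ↔ i = j ∨ i ∈ φ := by
  constructor
  · rintro ⟨s, rfl⟩
    simp only [insertSIM]
    split_ifs
    · exact Or.inr (φ.seq_mem s)
    · exact Or.inl rfl
    · exact Or.inr (φ.seq_mem _)
  · rintro (rfl | ⟨s, rfl⟩)
    · exact ⟨φ.wedgePos i, by simp [insertSIM]⟩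
    · rcases Nat.lt_or_ge s (φ.wedgePos j) with h | h
      · exact ⟨s, by simp [insertSIM, h]⟩
      · exact ⟨s + 1, by simp [insertSIM, show ¬ s + 1 < φ.wedgePos j by omega,
          show s + 1 ≠ φ.wedgePos j by omega]⟩

theorem notMem_insertSIM (hj : ∀ s, φ.seq s ≠ j) (hi : i ∉ φ) (hij : i ≠ j) :
    ∀ s, (φ.insertSIM j hj).seq s ≠ i :=
  notMem_iff.1 fun h => ((mem_insertSIM hj).1 h).elim hij hi

theorem mem_removeSIM {s : ℕ} : i ∈ φ.removeSIM s ↔ i ∈ φ ∧ i ≠ φ.seq s := by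
  constructor
  · rintro ⟨t, rfl⟩
    simp only [removeSIM]
    split_ifs with h
    · exact ⟨φ.seq_mem t, φ.anti.injective.ne (by omega)⟩
    · exact ⟨φ.seq_mem _, φ.anti.injective.ne (by omega)⟩
  · rintro ⟨⟨t, rfl⟩, hts⟩
    have hts : t ≠ s := fun h => hts (h ▸ rfl)
    rcases Nat.lt_or_gt_of_ne hts with h | h
    · exact ⟨t, by simp [removeSIM, h]⟩
    · exact ⟨t - 1, by
        simp [removeSIM, show ¬ t - 1 < s by omega, show t - 1 + 1 = t by omega]⟩

open Classical in
noncomputable def entriesAbove (φ : SIM) (i : ℤ) : Finset ℤ :=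
  (Finset.Ioc i (φ.seq 0)).filter (· ∈ φ)

theorem mem_entriesAbove {x : ℤ} : x ∈ φ.entriesAbove i ↔ x ∈ φ ∧ i < x := by
  simp only [entriesAbove, Finset.mem_filter, Finset.mem_Ioc]
  exact ⟨fun h => ⟨h.2, h.1.1⟩, fun h => ⟨⟨h.2, le_seq_zero_of_mem h.1⟩, h.1⟩⟩

theorem card_entriesAbove_eq {p : ℕ} (h : ∀ t, t < p ↔ i < φ.seq t) :
    (φ.entriesAbove i).card = p := by
  have : φ.entriesAbove i = (Finset.range p).image φ.seq := by
    ext x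
    simp only [mem_entriesAbove, Finset.mem_image, Finset.mem_range]
    constructor
    · rintro ⟨⟨t, rfl⟩, hx⟩
      exact ⟨t, (h t).2 hx, rfl⟩
    · rintro ⟨t, ht, rfl⟩
      exact ⟨φ.seq_mem t, (h t).1 ht⟩
  rw [this, Finset.card_image_of_injective _ φ.anti.injective, Finset.card_range]

theorem card_entriesAbove_seq (φ : SIM) (s : ℕ) : (φ.entriesAbove (φ.seq s)).card = s :=
  card_entriesAbove_eq fun _ => (StrictAnti.lt_iff_gt φ.anti).symm

theorem wedgePos_eq_card_entriesAbove (hj : ∀ s, φ.seq s ≠ j) :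
    φ.wedgePos j = (φ.entriesAbove j).card := by
  refine (card_entriesAbove_eq fun t => ⟨fun ht => ?_, fun ht => ?_⟩).symm
  · have h1 := Nat.find_min (φ.exists_lt j) ht
    have h2 := hj t
    omega
  · by_contra hc
    have h1 := φ.anti.antitone (not_lt.1 hc)
    have h2 : φ.seq (φ.wedgePos j) < j := Nat.find_spec (φ.exists_lt j)
    omega

theorem card_entriesAbove_insertSIM (hj : ∀ s, φ.seq s ≠ j) (i : ℤ) :
    ((φ.insertSIM j hj).entriesAbove i).card =
      (φ.entriesAbove i).card + if i < j then 1 else 0 := by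
  have hj' : j ∉ φ.entriesAbove i := fun h => notMem_iff.2 hj (mem_entriesAbove.1 h).1
  split_ifs with hij
  · rw [← Finset.card_insert_of_notMem hj']
    congr 1
    ext x
    simp only [mem_entriesAbove, mem_insertSIM, Finset.mem_insert]
    constructor
    · rintro ⟨rfl | hx, hix⟩ <;> tauto
    · rintro (rfl | ⟨hx, hix⟩) <;> tauto
  · rw [add_zero]
    congr 1
    ext x
    simp only [mem_entriesAbove, mem_insertSIM]
    constructor
    · rintro ⟨rfl | hx, hix⟩ <;> tauto
    · rintro ⟨hx, hix⟩; tauto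

theorem card_entriesAbove_removeSIM (s : ℕ) (i : ℤ) :
    ((φ.removeSIM s).entriesAbove i).card + (if i < φ.seq s then 1 else 0) =
      (φ.entriesAbove i).card := by
  have : (φ.removeSIM s).entriesAbove i = (φ.entriesAbove i).erase (φ.seq s) := by
    ext x
    simp only [mem_entriesAbove, mem_removeSIM, Finset.mem_erase]
    tauto
  rw [this]
  split_ifs with h
  · exact Finset.card_erase_add_one (mem_entriesAbove.2 ⟨φ.seq_mem s, h⟩)
  · rw [add_zero, Finset.erase_eq_of_notMem fun hm => h (mem_entriesAbove.1 hm).2]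

end SIM

open SIM

theorem Finsupp.lift_single_one {R M X : Type*} [Semiring R] [AddCommMonoid M] [Module R M]
    (f : X → M) (x : X) : Finsupp.lift M R X f (Finsupp.single x 1) = f x := by
  simp

theorem FockF.ext_single {f g : FockF →ₗ[ℂ] FockF}
    (h : ∀ φ, f (Finsupp.single φ 1) = g (Finsupp.single φ 1)) : f = g :=
  Finsupp.basisSingleOne.ext fun φ => by simpa using h φ

section Basis

variable {φ : SIM} {i j k : ℤ}

theorem psi_single_of_mem_s7 (h : j ∈ φ) : psi j (Finsupp.single φ 1) = 0 := by
  rw [psi, Finsupp.lift_single_one, dif_neg fun hj => notMem_iff.2 hj h]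

theorem psi_single (hj : ∀ s, φ.seq s ≠ j) :
    psi j (Finsupp.single φ 1) =
      (-1 : ℂ) ^ (φ.entriesAbove j).card • Finsupp.single (φ.insertSIM j hj) 1 := by
  rw [psi, Finsupp.lift_single_one, dif_pos hj, wedgePos_eq_card_entriesAbove hj]

theorem psiStar_single_of_notMem (h : j ∉ φ) : psiStar j (Finsupp.single φ 1) = 0 := by
  rw [psiStar, Finsupp.lift_single_one, dif_neg (show ¬∃ s, φ.seq s = j from h)]

theorem psiStar_single {s : ℕ} (h : φ.seq s = j) :
    psiStar j (Finsupp.single φ 1) =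
      (-1 : ℂ) ^ (φ.entriesAbove j).card • Finsupp.single (φ.removeSIM s) 1 := by
  have hj : ∃ t, φ.seq t = j := ⟨s, h⟩
  have hs : hj.choose = s := φ.anti.injective (hj.choose_spec.trans h.symm)
  rw [psiStar, Finsupp.lift_single_one, dif_pos hj, hs, ← h, card_entriesAbove_seq]

theorem psi_psi_single_of_mem_s7 (h : i ∈ φ) (k : ℤ) :
    psi i (psi k (Finsupp.single φ 1)) = 0 := by
  by_cases hk : k ∈ φ
  · rw [psi_single_of_mem_s7 hk, map_zero]
  · rw [psi_single (notMem_iff.1 hk), map_smul,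
      psi_single_of_mem_s7 ((mem_insertSIM _).2 (Or.inr h)), smul_zero]

theorem psiStar_psiStar_single_of_notMem (h : i ∉ φ) (k : ℤ) :
    psiStar i (psiStar k (Finsupp.single φ 1)) = 0 := by
  by_cases hk : k ∈ φ
  · obtain ⟨s, hs⟩ := hk
    rw [psiStar_single hs, map_smul,
      psiStar_single_of_notMem fun hi => h (mem_removeSIM.1 hi).1, smul_zero]
  · rw [psiStar_single_of_notMem hk, map_zero]

theorem psi_psiStar_single_of_mem_s7 (hjk : j ≠ k) (h : j ∈ φ) :
    psi j (psiStar k (Finsupp.single φ 1)) = 0 := by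
  by_cases hk : k ∈ φ
  · obtain ⟨s, hs⟩ := hk
    rw [psiStar_single hs, map_smul,
      psi_single_of_mem_s7 (mem_removeSIM.2 ⟨h, hs ▸ hjk⟩), smul_zero]
  · rw [psiStar_single_of_notMem hk, map_zero]

theorem psiStar_psi_single_of_notMem (hjk : j ≠ k) (h : k ∉ φ) :
    psiStar k (psi j (Finsupp.single φ 1)) = 0 := by
  by_cases hj : j ∈ φ
  · rw [psi_single_of_mem_s7 hj, map_zero]
  · rw [psi_single (notMem_iff.1 hj), map_smul, psiStar_single_of_notMem, smul_zero]
    rw [mem_insertSIM]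
    rintro (rfl | hk)
    exacts [hjk rfl, h hk]

theorem mem_and_notMem_of_psi_psiStar_single_ne_zero (hjk : j ≠ k)
    (h : psi j (psiStar k (Finsupp.single φ 1)) ≠ 0) : k ∈ φ ∧ j ∉ φ := by
  refine ⟨?_, fun hj => h (psi_psiStar_single_of_mem_s7 hjk hj)⟩
  by_contra hk
  exact h (by rw [psiStar_single_of_notMem hk, map_zero])

end Basis

theorem psi_mul_psi_add (i k : ℤ) : psi i * psi k + psi k * psi i = 0 := by
  refine FockF.ext_single fun φ => ?_
  simp only [LinearMap.add_apply, Module.End.mul_apply, LinearMap.zero_apply]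
  by_cases hi : i ∈ φ
  · rw [psi_psi_single_of_mem_s7 hi, psi_single_of_mem_s7 hi, map_zero, add_zero]
  by_cases hk : k ∈ φ
  · rw [psi_psi_single_of_mem_s7 hk, psi_single_of_mem_s7 hk, map_zero, zero_add]
  rw [notMem_iff] at hi hk
  by_cases hik : i = k
  · subst hik
    rw [psi_single hi, map_smul, psi_single_of_mem_s7 ((mem_insertSIM hi).2 (Or.inl rfl)),
      smul_zero, add_zero]
  have hki := notMem_insertSIM hk (notMem_iff.2 hi) hik
  have hik' := notMem_insertSIM hi (notMem_iff.2 hk) (Ne.symm hik)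
  have hcomm : (φ.insertSIM k hk).insertSIM i hki = (φ.insertSIM i hi).insertSIM k hik' :=
    ext_of_mem fun x => by simp only [mem_insertSIM]; tauto
  rw [psi_single hk, psi_single hi, map_smul, map_smul, psi_single hki, psi_single hik',
    card_entriesAbove_insertSIM, card_entriesAbove_insertSIM, hcomm]
  rcases lt_or_gt_of_ne hik with h | h
  · simp only [if_pos h, if_neg h.not_gt]
    module
  · simp only [if_pos h, if_neg h.not_gt]
    module

theorem psiStar_mul_psiStar_add (a b : ℤ) :
    psiStar a * psiStar b + psiStar b * psiStar a = 0 := by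
  refine FockF.ext_single fun φ => ?_
  simp only [LinearMap.add_apply, Module.End.mul_apply, LinearMap.zero_apply]
  by_cases ha : a ∉ φ
  · rw [psiStar_psiStar_single_of_notMem ha, psiStar_single_of_notMem ha, map_zero, add_zero]
  by_cases hb : b ∉ φ
  · rw [psiStar_psiStar_single_of_notMem hb, psiStar_single_of_notMem hb, map_zero, zero_add]
  obtain ⟨s, rfl⟩ := not_not.1 ha
  obtain ⟨t, rfl⟩ := not_not.1 hb
  by_cases hst : s = t
  · subst hst
    rw [psiStar_single rfl, map_smul,
      psiStar_single_of_notMem fun h => (mem_removeSIM.1 h).2 rfl, smul_zero, add_zero]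
  have hne : φ.seq s ≠ φ.seq t := φ.anti.injective.ne hst
  obtain ⟨s', hs'⟩ := mem_removeSIM.2 ⟨φ.seq_mem s, hne⟩
  obtain ⟨t', ht'⟩ := mem_removeSIM.2 ⟨φ.seq_mem t, hne.symm⟩
  have hcomm : (φ.removeSIM t).removeSIM s' = (φ.removeSIM s).removeSIM t' :=
    ext_of_mem fun x => by simp only [mem_removeSIM, hs', ht']; tauto
  have hA := card_entriesAbove_removeSIM (φ := φ) t (φ.seq s)
  have hB := card_entriesAbove_removeSIM (φ := φ) s (φ.seq t)
  rw [psiStar_single rfl, psiStar_single rfl, map_smul, map_smul, psiStar_single hs',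
    psiStar_single ht', hcomm]
  rcases lt_or_gt_of_ne hne with h | h
  · simp only [if_pos h, if_neg h.not_gt, add_zero] at hA hB
    rw [← hA, hB]
    module
  · simp only [if_pos h, if_neg h.not_gt, add_zero] at hA hB
    rw [← hB, hA]
    module

theorem psi_psiStar_add_psiStar_psi_self_single (φ : SIM) (j : ℤ) :
    psi j (psiStar j (Finsupp.single φ 1)) + psiStar j (psi j (Finsupp.single φ 1)) =
      Finsupp.single φ 1 := by
  by_cases hj : j ∈ φ
  · obtain ⟨s, rfl⟩ := hj
    have hrem : ∀ t, (φ.removeSIM s).seq t ≠ φ.seq s :=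
      notMem_iff.1 fun h => (mem_removeSIM.1 h).2 rfl
    have hinv : (φ.removeSIM s).insertSIM (φ.seq s) hrem = φ :=
      ext_of_mem fun x => by
        simp only [mem_insertSIM, mem_removeSIM]
        constructor
        · rintro (rfl | ⟨hx, -⟩)
          exacts [φ.seq_mem s, hx]
        · intro hx
          by_cases x = φ.seq s <;> tauto
    have hcard := card_entriesAbove_removeSIM (φ := φ) s (φ.seq s)
    rw [if_neg (lt_irrefl _), add_zero] at hcard
    rw [psi_single_of_mem_s7 (φ.seq_mem s), map_zero, add_zero, psiStar_single rfl, map_smul,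
      psi_single hrem, hinv, hcard, smul_smul, ← pow_add, Even.neg_one_pow ⟨_, rfl⟩, one_smul]
  · have hj' := notMem_iff.1 hj
    obtain ⟨s, hs⟩ := (mem_insertSIM hj').2 (Or.inl rfl)
    have hinv : (φ.insertSIM j hj').removeSIM s = φ :=
      ext_of_mem fun x => by
        simp only [mem_insertSIM, mem_removeSIM, hs]
        constructor
        · rintro ⟨rfl | hx, hxj⟩
          exacts [absurd rfl hxj, hx]
        · intro hx
          exact ⟨Or.inr hx, fun h => hj (h ▸ hx)⟩
    rw [psiStar_single_of_notMem hj, map_zero, zero_add, psi_single hj', map_smul,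
      psiStar_single hs, hinv, card_entriesAbove_insertSIM, if_neg (lt_irrefl _), add_zero,
      smul_smul, ← pow_add, Even.neg_one_pow ⟨_, rfl⟩, one_smul]

theorem psi_psiStar_add_psiStar_psi_single_of_ne {j a : ℤ} (hja : j ≠ a) (φ : SIM) :
    psi j (psiStar a (Finsupp.single φ 1)) + psiStar a (psi j (Finsupp.single φ 1)) = 0 := by
  by_cases ha : a ∉ φ
  · rw [psiStar_single_of_notMem ha, map_zero, zero_add, psiStar_psi_single_of_notMem hja ha]
  by_cases hj : j ∈ φ
  · rw [psi_single_of_mem_s7 hj, map_zero, add_zero, psi_psiStar_single_of_mem_s7 hja hj]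
  obtain ⟨s, rfl⟩ := not_not.1 ha
  have hj' := notMem_iff.1 hj
  have hrem : ∀ t, (φ.removeSIM s).seq t ≠ j :=
    notMem_iff.1 fun h => hj (mem_removeSIM.1 h).1
  obtain ⟨s', hs'⟩ := (mem_insertSIM hj').2 (Or.inr (φ.seq_mem s))
  have hcomm : (φ.removeSIM s).insertSIM j hrem = (φ.insertSIM j hj').removeSIM s' :=
    ext_of_mem fun x => by
      simp only [mem_insertSIM, mem_removeSIM, hs']
      constructor
      · rintro (rfl | ⟨hx, hxs⟩)
        exacts [⟨Or.inl rfl, hja⟩, ⟨Or.inr hx, hxs⟩]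
      · rintro ⟨rfl | hx, hxs⟩
        exacts [Or.inl rfl, Or.inr ⟨hx, hxs⟩]
  have hJ := card_entriesAbove_removeSIM (φ := φ) s j
  rw [psiStar_single rfl, map_smul, psi_single hrem, psi_single hj', map_smul,
    psiStar_single hs', card_entriesAbove_insertSIM, hcomm]
  rcases lt_or_gt_of_ne hja with h | h
  · simp only [if_pos h, if_neg h.not_gt, add_zero] at hJ ⊢
    rw [← hJ]
    module
  · simp only [if_pos h, if_neg h.not_gt, add_zero] at hJ ⊢
    rw [hJ]
    module

theorem psi_mul_psiStar_add (j a : ℤ) :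
    psi j * psiStar a + psiStar a * psi j = if j = a then 1 else 0 := by
  refine FockF.ext_single fun φ => ?_
  simp only [LinearMap.add_apply, Module.End.mul_apply]
  split_ifs with hja
  · subst hja
    exact psi_psiStar_add_psiStar_psi_self_single φ j
  · exact psi_psiStar_add_psiStar_psi_single_of_ne hja φ

open Classical in
theorem psi_psiStar_self_single (φ : SIM) (j : ℤ) :
    psi j (psiStar j (Finsupp.single φ 1)) = if j ∈ φ then Finsupp.single φ 1 else 0 := by
  have h := psi_psiStar_add_psiStar_psi_self_single φ j
  split_ifs with hj
  · rwa [psi_single_of_mem_s7 hj, map_zero, add_zero] at h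
  · rw [psiStar_single_of_notMem hj, map_zero]

theorem psi_psiStar_commutator_apply (j a k b : ℤ) (x : FockF) :
    psi j (psiStar a (psi k (psiStar b x))) - psi k (psiStar b (psi j (psiStar a x))) =
      (if k = a then psi j (psiStar b x) else 0) - if j = b then psi k (psiStar a x) else 0 := by
  have h := LinearMap.congr_fun (mul_mul_sub_mul_mul_of_anticomm (R := Module.End ℂ FockF)
    (psi_mul_psi_add j k) (psiStar_mul_psiStar_add a b)) x
  rw [add_comm (psiStar a * psi k), psi_mul_psiStar_add, psi_mul_psiStar_add] at h
  split_ifs at h ⊢ <;> simpa using h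

noncomputable def truncAlpha (S : Finset ℤ) (n : ℤ) : Module.End ℂ FockF :=
  ∑ j ∈ S, psi j * psiStar (j + n)

theorem truncAlpha_apply (S : Finset ℤ) (n : ℤ) (x : FockF) :
    truncAlpha S n x = ∑ j ∈ S, psi j (psiStar (j + n) x) := by
  simp [truncAlpha]

theorem truncAlpha_commutator_apply (S : Finset ℤ) (m n : ℤ) (x : FockF) :
    truncAlpha S m (truncAlpha S n x) - truncAlpha S n (truncAlpha S m x) =
      ∑ j ∈ S.filter (· + m ∈ S), psi j (psiStar (j + (m + n)) x) -
        ∑ j ∈ S.filter (· + n ∈ S), psi j (psiStar (j + (m + n)) x) := by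
  simp only [truncAlpha_apply, map_sum]
  rw [Finset.sum_comm (f := fun a b => psi b (psiStar (b + n) (psi a (psiStar (a + m) x)))),
    ← Finset.sum_sub_distrib]
  simp only [← Finset.sum_sub_distrib, psi_psiStar_commutator_apply]
  simp only [Finset.sum_sub_distrib]
  rw [Finset.sum_comm (f := fun k j => if k = j + m then psi j (psiStar (k + n) x) else 0)]
  simp only [Finset.sum_ite_eq', Finset.sum_filter, add_assoc, add_comm n m]

namespace SIM

def IsVacuumOutside (φ : SIM) (R : ℕ) : Prop :=
  ∀ j : ℤ, (j < -R → j ∈ φ) ∧ (R < j → j ∉ φ)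

theorem exists_isVacuumOutside (φ : SIM) : ∃ R, φ.IsVacuumOutside R := by
  obtain ⟨m, N, hN⟩ := φ.ex_charge
  refine ⟨(m - N).natAbs + (φ.seq 0).natAbs, fun j => ⟨fun hj => ?_, fun hj h => ?_⟩⟩
  · refine ⟨(m - j).toNat, ?_⟩
    have := hN (m - j).toNat (by omega)
    omega
  · have := le_seq_zero_of_mem h
    omega

theorem IsVacuumOutside.mono {φ : SIM} {R R' : ℕ} (h : φ.IsVacuumOutside R) (hR : R ≤ R') :
    φ.IsVacuumOutside R' :=
  fun j => ⟨fun hj => (h j).1 (by omega), fun hj => (h j).2 (by omega)⟩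

end SIM

noncomputable def vacuumOutside (R : ℕ) : Submodule ℂ FockF :=
  Finsupp.supported ℂ ℂ {φ : SIM | φ.IsVacuumOutside R}

theorem single_mem_vacuumOutside {φ : SIM} {R : ℕ} (h : φ.IsVacuumOutside R) (c : ℂ) :
    Finsupp.single φ c ∈ vacuumOutside R :=
  Finsupp.single_mem_supported ℂ c h

theorem vacuumOutside_mono {R R' : ℕ} (hR : R ≤ R') : vacuumOutside R ≤ vacuumOutside R' :=
  Finsupp.supported_mono fun _ h => SIM.IsVacuumOutside.mono h hR

theorem vacuumOutside_eq_span (R : ℕ) :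
    vacuumOutside R =
      Submodule.span ℂ ((fun φ => Finsupp.single φ 1) '' {φ : SIM | φ.IsVacuumOutside R}) :=
  Finsupp.supported_eq_span_single ℂ _

theorem map_mem_vacuumOutside {f : Module.End ℂ FockF} {R R' : ℕ}
    (hf : ∀ φ : SIM, φ.IsVacuumOutside R → f (Finsupp.single φ 1) ∈ vacuumOutside R')
    {x : FockF} (hx : x ∈ vacuumOutside R) : f x ∈ vacuumOutside R' := by
  rw [vacuumOutside_eq_span] at hx
  exact Submodule.span_le (p := (vacuumOutside R').comap f).2
    (by rintro _ ⟨φ, hφ, rfl⟩; exact hf φ hφ) hx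

theorem psi_mem_vacuumOutside {R : ℕ} {j : ℤ} (hj : j ≤ R) {x : FockF}
    (hx : x ∈ vacuumOutside R) : psi j x ∈ vacuumOutside R := by
  refine map_mem_vacuumOutside (fun φ hφ => ?_) hx
  by_cases h : j ∈ φ
  · rw [psi_single_of_mem_s7 h]
    exact zero_mem _
  rw [psi_single (notMem_iff.1 h)]
  refine Submodule.smul_mem _ _
    (single_mem_vacuumOutside (fun i => ⟨fun hi => ?_, fun hi hmem => ?_⟩) 1)
  · exact (mem_insertSIM _).2 (Or.inr ((hφ i).1 hi))
  · exact ((mem_insertSIM _).1 hmem).elim (fun h => by omega) ((hφ i).2 hi)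

theorem psiStar_mem_vacuumOutside {R : ℕ} {k : ℤ} (hk : -(R : ℤ) ≤ k) {x : FockF}
    (hx : x ∈ vacuumOutside R) : psiStar k x ∈ vacuumOutside R := by
  refine map_mem_vacuumOutside (fun φ hφ => ?_) hx
  by_cases h : k ∈ φ
  · obtain ⟨s, hs⟩ := h
    rw [psiStar_single hs]
    refine Submodule.smul_mem _ _
      (single_mem_vacuumOutside (fun i => ⟨fun hi => ?_, fun hi hmem => ?_⟩) 1)
    · exact mem_removeSIM.2 ⟨(hφ i).1 hi, by omega⟩
    · exact (hφ i).2 hi (mem_removeSIM.1 hmem).1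
  · rw [psiStar_single_of_notMem h]
    exact zero_mem _

section Window

variable {φ : SIM} {R K : ℕ} {j m n : ℤ}

theorem bounds_of_psi_psiStar_single_ne_zero (hφ : φ.IsVacuumOutside R) (hn : n ≠ 0)
    (h : psi j (psiStar (j + n) (Finsupp.single φ 1)) ≠ 0) :
    -(R : ℤ) ≤ j ∧ j + n ≤ R := by
  obtain ⟨hmem, hnot⟩ := mem_and_notMem_of_psi_psiStar_single_ne_zero (by omega) h
  constructor
  · by_contra hj
    exact hnot ((hφ j).1 (by omega))
  · by_contra hj
    exact (hφ (j + n)).2 (by omega) hmem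

theorem psi_psiStar_mem_vacuumOutside {x : FockF} (hx : x ∈ vacuumOutside R) (j n : ℤ) :
    psi j (psiStar (j + n) x) ∈ vacuumOutside (R + n.natAbs) := by
  refine map_mem_vacuumOutside (f := psi j * psiStar (j + n)) (fun φ hφ => ?_) hx
  rw [Module.End.mul_apply]
  rcases eq_or_ne n 0 with rfl | hn
  · rw [add_zero, psi_psiStar_self_single]
    split_ifs
    exacts [single_mem_vacuumOutside hφ 1, zero_mem _]
  by_cases h0 : psi j (psiStar (j + n) (Finsupp.single φ 1)) = 0
  · rw [h0]
    exact zero_mem _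
  obtain ⟨hlo, hhi⟩ := bounds_of_psi_psiStar_single_ne_zero hφ hn h0
  refine psi_mem_vacuumOutside (by omega) (psiStar_mem_vacuumOutside (by omega) ?_)
  exact vacuumOutside_mono (by omega) (single_mem_vacuumOutside hφ 1)

theorem truncAlpha_mem_vacuumOutside {x : FockF} (hx : x ∈ vacuumOutside R) (S : Finset ℤ)
    (n : ℤ) : truncAlpha S n x ∈ vacuumOutside (R + n.natAbs) := by
  rw [truncAlpha_apply]
  exact Submodule.sum_mem _ fun j _ => psi_psiStar_mem_vacuumOutside hx j n

theorem alpha_single_of_ne_zero (hφ : φ.IsVacuumOutside R) (hn : n ≠ 0)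
    (hK : R + n.natAbs ≤ K) :
    alpha n (Finsupp.single φ 1) =
      truncAlpha (Finset.Icc (-K : ℤ) K) n (Finsupp.single φ 1) := by
  rw [alpha, Finsupp.lift_single_one, if_neg hn, truncAlpha_apply]
  refine finsum_eq_sum_of_support_subset _ fun j hj => ?_
  have := bounds_of_psi_psiStar_single_ne_zero hφ hn hj
  simp only [Finset.coe_Icc, Set.mem_Icc]
  omega

theorem alpha_zero_single (hφ : φ.IsVacuumOutside R) (hK : R ≤ K) :
    alpha 0 (Finsupp.single φ 1) =
      truncAlpha (Finset.Icc (-K : ℤ) K) 0 (Finsupp.single φ 1) -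
        (K + 1 : ℂ) • Finsupp.single φ 1 := by
  set S := Finset.Icc (-K : ℤ) K
  have hS : (S.filter fun j => ¬0 < j).card = K + 1 := by
    rw [show S.filter (fun j => ¬0 < j) = Finset.Icc (-K : ℤ) 0 by ext; simp [S]; omega,
      Int.card_Icc]
    omega
  have hstar (j : ℤ) : psiStar j (psi j (Finsupp.single φ 1)) =
      Finsupp.single φ 1 - psi j (psiStar j (Finsupp.single φ 1)) :=
    eq_sub_of_add_eq' (psi_psiStar_add_psiStar_psi_self_single φ j)
  rw [alpha, Finsupp.lift_single_one, if_pos rfl, truncAlpha_apply,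
    finsum_cond_eq_sum_of_cond_iff _ (t := S.filter (0 < ·)) fun {j} hj => ?pos,
    finsum_cond_eq_sum_of_cond_iff _ (t := S.filter fun j => ¬0 < j) fun {j} hj => ?nonpos,
    ← Finset.sum_filter_add_sum_filter_not S (0 < ·)]
  · simp only [add_zero, hstar, Finset.sum_sub_distrib, Finset.sum_const, hS]
    rw [← Nat.cast_smul_eq_nsmul ℂ]
    push_cast
    abel
  case pos =>
    have : j ≤ R := by
      by_contra hjR
      rw [psi_psiStar_self_single, if_neg ((hφ j).2 (by omega))] at hj
      exact hj rfl
    simp only [Finset.mem_filter, Finset.mem_Icc, S]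
    omega
  case nonpos =>
    have : -(R : ℤ) ≤ j := by
      by_contra hjR
      rw [psi_single_of_mem_s7 ((hφ j).1 (by omega)), map_zero] at hj
      exact hj rfl
    simp only [Finset.mem_filter, Finset.mem_Icc, S]
    omega

/-- `K + 1` counts the modes `-K ≤ j ≤ 0`, where `α_0` has `-ψ_j^* ψ_j = ψ_j ψ_j^* - 1`. -/
theorem alpha_single (hφ : φ.IsVacuumOutside R) (hK : R + n.natAbs ≤ K) :
    alpha n (Finsupp.single φ 1) =
      truncAlpha (Finset.Icc (-K : ℤ) K) n (Finsupp.single φ 1) -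
        (if n = 0 then (K + 1 : ℂ) else 0) • Finsupp.single φ 1 := by
  split_ifs with hn
  · subst hn
    exact alpha_zero_single hφ (by simpa using hK)
  · rw [zero_smul, sub_zero, alpha_single_of_ne_zero hφ hn hK]

theorem alpha_apply_of_mem {x : FockF} (hx : x ∈ vacuumOutside R) (hK : R + n.natAbs ≤ K) :
    alpha n x = truncAlpha (Finset.Icc (-K : ℤ) K) n x -
      (if n = 0 then (K + 1 : ℂ) else 0) • x := by
  rw [vacuumOutside_eq_span] at hx
  have := LinearMap.eqOn_span (f := alpha n) (g := truncAlpha (Finset.Icc (-K : ℤ) K) n -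
    (if n = 0 then (K + 1 : ℂ) else 0) • LinearMap.id) ?_ hx
  · simpa only [LinearMap.sub_apply, LinearMap.smul_apply, LinearMap.id_apply] using this
  rintro _ ⟨φ, hφ, rfl⟩
  simpa only [LinearMap.sub_apply, LinearMap.smul_apply, LinearMap.id_apply] using
    alpha_single hφ hK

theorem alpha_mem_vacuumOutside {x : FockF} (hx : x ∈ vacuumOutside R) (n : ℤ) :
    alpha n x ∈ vacuumOutside (R + n.natAbs) := by
  rw [alpha_apply_of_mem hx le_rfl]
  exact sub_mem (truncAlpha_mem_vacuumOutside hx _ n)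
    (Submodule.smul_mem _ _ (vacuumOutside_mono (Nat.le_add_right _ _) hx))

theorem alpha_commutator_single (hφ : φ.IsVacuumOutside R) (hK : R + m.natAbs + n.natAbs ≤ K) :
    alpha m (alpha n (Finsupp.single φ 1)) - alpha n (alpha m (Finsupp.single φ 1)) =
      truncAlpha (Finset.Icc (-K : ℤ) K) m (truncAlpha (Finset.Icc (-K : ℤ) K) n
          (Finsupp.single φ 1)) -
        truncAlpha (Finset.Icc (-K : ℤ) K) n (truncAlpha (Finset.Icc (-K : ℤ) K) m
          (Finsupp.single φ 1)) := by
  have hx := single_mem_vacuumOutside hφ 1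
  rw [alpha_apply_of_mem (alpha_mem_vacuumOutside hx n) (K := K) (by omega),
    alpha_apply_of_mem (alpha_mem_vacuumOutside hx m) (K := K) (by omega),
    alpha_apply_of_mem hx (n := n) (K := K) (by omega),
    alpha_apply_of_mem hx (n := m) (K := K) (by omega)]
  simp only [map_sub, map_smul]
  module

theorem alpha_commutator_single_of_add_ne_zero (hmn : m + n ≠ 0) (φ : SIM) :
    alpha m (alpha n (Finsupp.single φ 1)) - alpha n (alpha m (Finsupp.single φ 1)) = 0 := by
  obtain ⟨R, hφ⟩ := φ.exists_isVacuumOutside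
  set K := R + m.natAbs + n.natAbs
  have hsum {p : ℤ} (hp : p = m ∨ p = n) :
      ∑ j ∈ (Finset.Icc (-K : ℤ) K).filter (· + p ∈ Finset.Icc (-K : ℤ) K),
          psi j (psiStar (j + (m + n)) (Finsupp.single φ 1)) =
        ∑ j ∈ Finset.Icc (-K : ℤ) K, psi j (psiStar (j + (m + n)) (Finsupp.single φ 1)) := by
    refine Finset.sum_filter_of_ne fun j _ hj => ?_
    have := bounds_of_psi_psiStar_single_ne_zero hφ hmn hj
    simp only [Finset.mem_Icc]
    omega
  rw [alpha_commutator_single hφ le_rfl, truncAlpha_commutator_apply, hsum (Or.inl rfl),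
    hsum (Or.inr rfl), sub_self]

open Classical in
theorem card_filter_mem_Icc (hφ : φ.IsVacuumOutside R) {a b : ℤ} (ha : a ≤ -R)
    (hb : R ≤ b) :
    (((Finset.Icc a b).filter (· ∈ φ)).card : ℤ) =
      -R - a + ((Finset.Icc (-R : ℤ) R).filter (· ∈ φ)).card := by
  have hsplit : (Finset.Icc a b).filter (· ∈ φ) =
      Finset.Ico a (-R) ∪ (Finset.Icc (-R : ℤ) R).filter (· ∈ φ) := by
    ext j
    simp only [Finset.mem_filter, Finset.mem_Icc, Finset.mem_union, Finset.mem_Ico]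
    obtain ⟨hlo, hhi⟩ := hφ j
    constructor
    · rintro ⟨⟨h1, h2⟩, h3⟩
      by_cases hj : j < -R
      · exact Or.inl ⟨h1, hj⟩
      · exact Or.inr ⟨⟨by omega, not_lt.1 fun hR => hhi hR h3⟩, h3⟩
    · rintro (⟨h1, h2⟩ | ⟨⟨h1, h2⟩, h3⟩)
      exacts [⟨⟨h1, by omega⟩, hlo h2⟩, ⟨⟨by omega, by omega⟩, h3⟩]
  rw [hsplit, Finset.card_union_of_disjoint, Int.card_Ico]
  · push_cast
    omega
  · refine Finset.disjoint_left.2 fun j h1 h2 => ?_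
    simp only [Finset.mem_Ico, Finset.mem_filter, Finset.mem_Icc] at h1 h2
    omega

theorem alpha_commutator_single_neg (m : ℕ) (φ : SIM) :
    alpha m (alpha (-m) (Finsupp.single φ 1)) - alpha (-m) (alpha m (Finsupp.single φ 1)) =
      (m : ℂ) • Finsupp.single φ 1 := by
  classical
  obtain ⟨R, hφ⟩ := φ.exists_isVacuumOutside
  set K := R + 2 * m
  set S := Finset.Icc (-K : ℤ) K
  have h1 : S.filter (· + (m : ℤ) ∈ S) = Finset.Icc (-K : ℤ) (K - m) := by
    ext; simp [S]; omega
  have h2 : S.filter (· + -(m : ℤ) ∈ S) = Finset.Icc (-K + m : ℤ) K := by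
    ext; simp [S]; omega
  rw [alpha_commutator_single hφ (K := K) (by simp [K]; omega), truncAlpha_commutator_apply,
    h1, h2, add_neg_cancel]
  simp only [add_zero, psi_psiStar_self_single, Finset.sum_ite, Finset.sum_const_zero,
    Finset.sum_const, ← Nat.cast_smul_eq_nsmul ℂ, ← sub_smul]
  congr 1
  have hA := card_filter_mem_Icc hφ (a := -K) (b := K - m) (by omega) (by omega)
  have hB := card_filter_mem_Icc hφ (a := -K + m) (b := K) (by omega) (by omega)
  have : (((Finset.Icc (-K : ℤ) (K - m)).filter (· ∈ φ)).card : ℤ) -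
      ((Finset.Icc (-K + m : ℤ) K).filter (· ∈ φ)).card = m := by
    rw [hA, hB]
    ring
  exact_mod_cast this

end Window

/-- the free bosons satisfy the oscillator (Heisenberg) commutation relations
`[α_m, α_n] = m δ_{m,−n} id_F` on `F`; in particular `s_n ↦ α_n`, `K ↦ id` defines a
representation of the oscillator algebra on `F`. -/
theorem alpha_heisenberg (m n : ℤ) :
    alpha m ∘ₗ alpha n - alpha n ∘ₗ alpha m
      = if m = -n then (m : ℂ) • (LinearMap.id : FockF →ₗ[ℂ] FockF) else 0 := by
  refine FockF.ext_single fun φ => ?_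
  rw [LinearMap.sub_apply, LinearMap.comp_apply, LinearMap.comp_apply]
  split_ifs with h
  · rw [LinearMap.smul_apply, LinearMap.id_apply]
    subst h
    obtain ⟨k, rfl | rfl⟩ := Int.eq_nat_or_neg n
    · rw [← neg_sub, alpha_commutator_single_neg, Int.cast_neg, Int.cast_natCast, neg_smul]
    · rw [neg_neg]
      exact alpha_commutator_single_neg k φ
  · exact alpha_commutator_single_of_add_ne_zero (by omega) φ
end

section
/- Let V be a complex vector space equipped with linear operators a_n for n ∈ ℤ∖{0} satisfying [a_m, a_n] = m δ_{m,−n}·id_V, and let v ∈ V be nonzero with a_n v = 0 for all n > 0. Then the vectors a_{−λ_1} a_{−λ_2} ⋯ a_{−λ_ℓ} v, indexed by partitions λ = (λ_1 ≥ … ≥ λ_ℓ ≥ 1), are linearly independent; and if moreover the only subspaces of V invariant under all a_n are 0 and V, these vectors form a basis of V (uniqueness of the irreducible oscillator representation, Corollary 9.13 of Kac). -/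
/-- A partition, encoded as a non-increasing list of positive integers
(the empty list is the empty partition). -/
def SortedPartList : Type := {l : List ℕ+ // l.Pairwise (· ≥ ·)}

/-- The vector `a_{-λ_1} a_{-λ_2} ⋯ a_{-λ_ℓ} v` associated to a partition
`λ = (λ_1 ≥ … ≥ λ_ℓ ≥ 1)`. -/
noncomputable def partVector {V : Type*} [AddCommGroup V] [Module ℂ V]
    (a : ℤ → (V →ₗ[ℂ] V)) (v : V) (l : SortedPartList) : V :=
  (l.1.map fun i => a (-((i : ℕ) : ℤ))).prod v

/-!
The creation operators `a_{-i}` (`i > 0`) commute, so the vector attached to a partition only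
depends on its multiset of parts `ν`; call it `F ν`. Each annihilation operator `a_m` acts on
these vectors as a derivation, `a_m F ν = m · (mult. of m in ν) · F (ν - {m})`, so the product
`A_μ` of the `a_m`, `m ∈ μ`, sends `F ν` to `c · F (ν - μ)` with `c ≠ 0` exactly when `μ ≤ ν`.
Applying `A_μ` for a maximal `μ` in the support of a vanishing linear combination isolates its
coefficient, which gives linear independence. The span of the `F ν` is stable under all the
`a_n` and contains `v ≠ 0`, so irreducibility forces it to be `V`.
-/

theorem linearIndependent_of_triangular {R M N ι : Type*} [DivisionRing R] [AddCommGroup M]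
    [Module R M] [AddCommGroup N] [Module R N] [PartialOrder ι]
    {f : ι → M} (φ : ι → M →ₗ[R] N) (h_off : ∀ i j, ¬ i ≤ j → φ i (f j) = 0)
    (h_diag : ∀ i, φ i (f i) ≠ 0) : LinearIndependent R f := by
  classical
  rw [linearIndependent_iff']
  intro s g hsum i₀ hi₀
  by_contra hg
  obtain ⟨i, hi⟩ := (s.filter (g · ≠ 0)).exists_maximal ⟨i₀, Finset.mem_filter.mpr ⟨hi₀, hg⟩⟩
  obtain ⟨his, hgi⟩ := Finset.mem_filter.mp hi.prop
  have hφ : ∑ j ∈ s, g j • φ i (f j) = g i • φ i (f i) := by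
    refine Finset.sum_eq_single_of_mem i his fun j hjs hji => ?_
    by_cases hgj : g j = 0
    · rw [hgj, zero_smul]
    · have hij : ¬ i ≤ j := fun hij =>
        hji (hi.eq_of_ge (Finset.mem_filter.mpr ⟨hjs, hgj⟩) hij)
      rw [h_off i j hij, smul_zero]
  have : g i • φ i (f i) = 0 := by
    rw [← hφ]
    simpa only [map_smul, map_sum, map_zero] using congrArg (φ i) hsum
  exact (smul_eq_zero.mp this).elim hgi (h_diag i)

theorem Multiset.prod_map_sort_coe_of_commute {α M : Type*} [Monoid M] (r : α → α → Prop)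
    [DecidableRel r] [IsTrans α r] [Std.Antisymm r] [Std.Total r] {f : α → M}
    (hf : ∀ i j, Commute (f i) (f j)) (l : List α) :
    (((l : Multiset α).sort r).map f).prod = (l.map f).prod :=
  ((Multiset.coe_eq_coe.mp (Multiset.sort_eq _ r)).map f).prod_eq'
    (List.pairwise_map.mpr (List.pairwise_of_forall fun i j => hf i j))

theorem Multiset.cons_le_iff_mem_and_le_erase {α : Type*} [DecidableEq α] {a : α}
    {s t : Multiset α} : a ::ₘ s ≤ t ↔ a ∈ t ∧ s ≤ t.erase a := by
  refine ⟨fun h => ⟨Multiset.mem_of_le h (Multiset.mem_cons_self a s), ?_⟩, fun ⟨ha, h⟩ => ?_⟩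
  · simpa using Multiset.erase_le_erase a h
  · simpa [Multiset.cons_erase ha] using Multiset.cons_le_cons a h

def SortedPartList.equivMultiset : SortedPartList ≃ Multiset ℕ+ where
  toFun l := l.1
  invFun s := ⟨s.sort (· ≥ ·), s.pairwise_sort _⟩
  left_inv l := Subtype.ext (List.mergeSort_eq_self _ l.2)
  right_inv s := s.sort_eq _

theorem SortedPartList.equivMultiset_symm_apply_coe (s : Multiset ℕ+) :
    (SortedPartList.equivMultiset.symm s).1 = s.sort (· ≥ ·) :=
  rfl

-- In `partVector`, `l.1` is first coerced to a `List ℕ` (through the list monad).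
theorem partVector_eq_prod {V : Type*} [AddCommGroup V] [Module ℂ V] (a : ℤ → (V →ₗ[ℂ] V))
    (v : V) (l : SortedPartList) :
    partVector a v l = (l.1.map fun i : ℕ+ => a (-((i : ℕ) : ℤ))).prod v := by
  simp only [partVector, List.pure_def, List.bind_eq_flatMap, ← List.map_eq_flatMap, List.map_map]
  rfl

namespace Oscillator

variable {V : Type*} [AddCommGroup V] [Module ℂ V] {a : ℤ → (V →ₗ[ℂ] V)} {v : V}

def Relations (a : ℤ → (V →ₗ[ℂ] V)) : Prop :=
  ∀ m n : ℤ, m ≠ 0 → n ≠ 0 →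
    a m ∘ₗ a n - a n ∘ₗ a m = if m = -n then (m : ℂ) • (LinearMap.id : V →ₗ[ℂ] V) else 0

theorem Relations.commute (h : Relations a) {m n : ℤ} (hm : m ≠ 0) (hn : n ≠ 0)
    (hmn : m ≠ -n) : Commute (a m) (a n) := by
  have := h m n hm hn
  rw [if_neg hmn, sub_eq_zero] at this
  exact this

theorem Relations.apply_apply_neg (h : Relations a) {m : ℤ} (hm : m ≠ 0) (x : V) :
    a m (a (-m) x) = a (-m) (a m x) + (m : ℂ) • x := by
  have := LinearMap.congr_fun (h m (-m) hm (neg_ne_zero.mpr hm)) x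
  rw [if_pos (neg_neg m).symm] at this
  simpa [sub_eq_iff_eq_add'] using this

theorem Relations.commute_creation (h : Relations a) (i j : ℕ+) :
    Commute (a (-((i : ℕ) : ℤ))) (a (-((j : ℕ) : ℤ))) :=
  h.commute (by simp) (by simp) (by simp)

theorem Relations.commute_annihilation (h : Relations a) (i j : ℕ+) :
    Commute (a ((i : ℕ) : ℤ)) (a ((j : ℕ) : ℤ)) :=
  h.commute (by simp) (by simp) (by simp)

/-- `∏_{i ∈ s} a_{-i} v`, computed along the decreasing enumeration of `s`; by `monomial_coe`
any enumeration gives the same vector. -/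
noncomputable def monomial (a : ℤ → (V →ₗ[ℂ] V)) (v : V) (s : Multiset ℕ+) : V :=
  partVector a v (SortedPartList.equivMultiset.symm s)

noncomputable def annihilator (a : ℤ → (V →ₗ[ℂ] V)) (s : Multiset ℕ+) : Module.End ℂ V :=
  ((s.sort (· ≥ ·)).map fun i : ℕ+ => a ((i : ℕ) : ℤ)).prod

theorem monomial_coe (h : Relations a) (l : List ℕ+) :
    monomial a v l = (l.map fun i : ℕ+ => a (-((i : ℕ) : ℤ))).prod v := by
  rw [monomial, partVector_eq_prod, SortedPartList.equivMultiset_symm_apply_coe,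
    Multiset.prod_map_sort_coe_of_commute _ h.commute_creation]

theorem annihilator_coe (h : Relations a) (l : List ℕ+) :
    annihilator a l = (l.map fun i : ℕ+ => a ((i : ℕ) : ℤ)).prod :=
  Multiset.prod_map_sort_coe_of_commute _ h.commute_annihilation l

theorem monomial_zero (h : Relations a) : monomial a v 0 = v := by
  simpa using monomial_coe (v := v) h []

theorem monomial_cons (h : Relations a) (m : ℕ+) (s : Multiset ℕ+) :
    monomial a v (m ::ₘ s) = a (-((m : ℕ) : ℤ)) (monomial a v s) := by
  induction s using Quotient.inductionOn with
  | h l =>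
    rw [Multiset.quot_mk_to_coe, Multiset.cons_coe, monomial_coe h, monomial_coe h]
    simp [Module.End.mul_apply]

theorem annihilator_zero : annihilator a 0 = 1 := by
  simp [annihilator]

theorem annihilator_cons (h : Relations a) (m : ℕ+) (s : Multiset ℕ+) :
    annihilator a (m ::ₘ s) = annihilator a s * a ((m : ℕ) : ℤ) := by
  induction s using Quotient.inductionOn with
  | h l =>
    rw [Multiset.quot_mk_to_coe, Multiset.cons_coe,
      Multiset.coe_eq_coe.mpr (List.perm_append_singleton m l).symm, annihilator_coe h,
      annihilator_coe h]
    simp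

theorem annihilation_apply_monomial (h : Relations a) (hv : ∀ n : ℤ, 0 < n → a n v = 0)
    (m : ℕ+) (s : Multiset ℕ+) :
    a ((m : ℕ) : ℤ) (monomial a v s) = ((m : ℂ) * s.count m) • monomial a v (s.erase m) := by
  induction s using Multiset.induction_on with
  | empty => simp [monomial_zero h, hv]
  | cons i s ih =>
    rw [monomial_cons h]
    by_cases him : i = m
    · subst him
      have hcreate : ((i : ℂ) * s.count i) • a (-((i : ℕ) : ℤ)) (monomial a v (s.erase i))
          = ((i : ℂ) * s.count i) • monomial a v s := by
        by_cases hi : i ∈ s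
        · rw [← monomial_cons h, Multiset.cons_erase hi]
        · simp [Multiset.count_eq_zero_of_notMem hi]
      rw [h.apply_apply_neg (by simp), ih, map_smul, hcreate, Multiset.count_cons_self,
        Multiset.erase_cons_head, ← add_smul]
      push_cast
      ring_nf
    · have hcomm : Commute (a ((m : ℕ) : ℤ)) (a (-((i : ℕ) : ℤ))) :=
        h.commute (by simp) (by simp) (by simpa [eq_comm] using him)
      rw [← Module.End.mul_apply, hcomm.eq, Module.End.mul_apply, ih, map_smul, ← monomial_cons h,
        Multiset.count_cons_of_ne (Ne.symm him), Multiset.erase_cons_tail s him]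

theorem exists_annihilator_apply_monomial (h : Relations a)
    (hv : ∀ n : ℤ, 0 < n → a n v = 0) (μ ν : Multiset ℕ+) :
    ∃ c : ℂ, annihilator a μ (monomial a v ν) = c • monomial a v (ν - μ) ∧ (c ≠ 0 ↔ μ ≤ ν) := by
  induction μ using Multiset.induction_on generalizing ν with
  | empty => exact ⟨1, by simp [annihilator_zero], by simp⟩
  | cons m μ ih =>
    obtain ⟨c, hc, hc_ne⟩ := ih (ν.erase m)
    refine ⟨(m : ℂ) * ν.count m * c, ?_, ?_⟩
    · rw [annihilator_cons h, Module.End.mul_apply, annihilation_apply_monomial h hv, map_smul,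
        hc, smul_smul, Multiset.sub_cons]
    · simp [Multiset.cons_le_iff_mem_and_le_erase, ← hc_ne]

theorem linearIndependent_monomial (h : Relations a) (hv₀ : v ≠ 0)
    (hv : ∀ n : ℤ, 0 < n → a n v = 0) : LinearIndependent ℂ (monomial a v) := by
  refine linearIndependent_of_triangular (annihilator a) (fun μ ν hμν => ?_) fun ν => ?_
  · obtain ⟨c, hc, hc_ne⟩ := exists_annihilator_apply_monomial h hv μ ν
    rw [hc, not_ne_iff.mp (mt hc_ne.mp hμν), zero_smul]
  · obtain ⟨c, hc, hc_ne⟩ := exists_annihilator_apply_monomial h hv ν ν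
    rw [hc, tsub_self, monomial_zero h]
    exact smul_ne_zero (hc_ne.mpr le_rfl) hv₀

theorem apply_mem_span_range_monomial (h : Relations a) (hv : ∀ n : ℤ, 0 < n → a n v = 0)
    {n : ℤ} (hn : n ≠ 0) {x : V} (hx : x ∈ Submodule.span ℂ (Set.range (monomial a v))) :
    a n x ∈ Submodule.span ℂ (Set.range (monomial a v)) := by
  suffices Submodule.span ℂ (Set.range (monomial a v))
      ≤ (Submodule.span ℂ (Set.range (monomial a v))).comap (a n) from this hx
  rw [Submodule.span_le, Set.range_subset_iff]
  intro s
  obtain ⟨m, rfl | rfl⟩ : ∃ m : ℕ+, n = ((m : ℕ) : ℤ) ∨ n = -((m : ℕ) : ℤ) :=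
    ⟨⟨n.natAbs, Int.natAbs_pos.mpr hn⟩, Int.natAbs_eq n⟩
  · rw [SetLike.mem_coe, Submodule.mem_comap, annihilation_apply_monomial h hv]
    exact Submodule.smul_mem _ _ (Submodule.subset_span ⟨_, rfl⟩)
  · rw [SetLike.mem_coe, Submodule.mem_comap, ← monomial_cons h]
    exact Submodule.subset_span ⟨_, rfl⟩

theorem span_range_monomial_ne_bot (h : Relations a) (hv₀ : v ≠ 0) :
    Submodule.span ℂ (Set.range (monomial a v)) ≠ ⊥ :=
  (Submodule.ne_bot_iff _).mpr
    ⟨monomial a v 0, Submodule.subset_span ⟨0, rfl⟩, by rwa [monomial_zero h]⟩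

end Oscillator

/-- if `V` carries operators `a_n` (`n ≠ 0`) with
`[a_m, a_n] = m δ_{m,−n} id_V` and `v ≠ 0` satisfies `a_n v = 0` for `n > 0`, then the
vectors `a_{-λ_1} ⋯ a_{-λ_ℓ} v` indexed by partitions are linearly independent; if
moreover the only subspaces of `V` invariant under all the `a_n` are `0` and `V`, these
vectors form a basis of `V`. -/
theorem oscillator_uniqueness {V : Type*} [AddCommGroup V] [Module ℂ V]
    (a : ℤ → (V →ₗ[ℂ] V))
    (hcomm : ∀ m n : ℤ, m ≠ 0 → n ≠ 0 →
      a m ∘ₗ a n - a n ∘ₗ a m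
        = if m = -n then (m : ℂ) • (LinearMap.id : V →ₗ[ℂ] V) else 0)
    (v : V) (hv : v ≠ 0) (hann : ∀ n : ℤ, 0 < n → a n v = 0) :
    LinearIndependent ℂ (partVector a v) ∧
    ((∀ S : Submodule ℂ V, (∀ n : ℤ, n ≠ 0 → ∀ x ∈ S, a n x ∈ S) → S = ⊥ ∨ S = ⊤) →
      Submodule.span ℂ (Set.range (partVector a v)) = ⊤) := by
  have hpart : partVector a v = Oscillator.monomial a v ∘ SortedPartList.equivMultiset :=
    funext fun l => by simp [Oscillator.monomial]
  rw [hpart, linearIndependent_equiv, SortedPartList.equivMultiset.surjective.range_comp]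
  refine ⟨Oscillator.linearIndependent_monomial hcomm hv hann, fun hirr => ?_⟩
  have hinv : ∀ n : ℤ, n ≠ 0 → ∀ x ∈ Submodule.span ℂ (Set.range (Oscillator.monomial a v)),
      a n x ∈ Submodule.span ℂ (Set.range (Oscillator.monomial a v)) :=
    fun n hn x => Oscillator.apply_mem_span_range_monomial hcomm hann hn
  exact (hirr _ hinv).resolve_left (Oscillator.span_range_monomial_ne_bot hcomm hv)
end

section
/- Let V be a complex vector space with a Hermitian (sesquilinear) form H, linear operators a_n for n ∈ ℤ∖{0} satisfying [a_m, a_n] = m δ_{m,−n}·id_V and H(a_n x, y) = H(x, a_{−n} y) for all n and all x, y, and a vector v with a_n v = 0 for all n > 0 and H(v, v) = 1. For a partition λ set p_λ = ∏_{i≥1} a_{−i}^{m_i(λ)} v, where m_i(λ) is the number of parts of λ equal to i, and set z_λ = ∏_{i≥1} i^{m_i(λ)} m_i(λ)!. Then H(p_λ, p_μ) = δ_{λ,μ} z_λ for all partitions λ, μ. -/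
instance : DecidableEq SortedPartList := fun l l' =>
  decidable_of_iff (l.1 = l'.1) Subtype.ext_iff.symm

/-- `m_i(λ)`: the number of parts of the partition `λ` equal to `i`. -/
def partMult (l : SortedPartList) (i : ℕ+) : ℕ := l.1.count i

/-- `z_λ = ∏_{i ≥ 1} i^{m_i(λ)} · m_i(λ)!` (a finite product). -/
def zPart (l : SortedPartList) : ℕ :=
  ∏ i ∈ l.1.toFinset, (i : ℕ) ^ partMult l i * Nat.factorial (partMult l i)

/-- `p_λ = ∏_{i ≥ 1} a_{-i}^{m_i(λ)} v`, realized as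
`a_{-λ_1} a_{-λ_2} ⋯ a_{-λ_ℓ} v` (the `a_{-i}`, `i > 0`, commute). -/
noncomputable def pPart {V : Type*} [AddCommGroup V] [Module ℂ V]
    (a : ℤ → (V →ₗ[ℂ] V)) (v : V) (l : SortedPartList) : V :=
  (l.1.map fun i => a (-((i : ℕ) : ℤ))).prod v

/-!
The operators `a_n`, `n > 0`, act on the vectors `p_L = a_{-L_1} ⋯ a_{-L_k} v` like `n ∂/∂p_n`:
since `a_n v = 0` and `[a_n, a_{-k}] = n δ_{nk}`, we get `a_n p_L = n m_n(L) p_{L ∖ n}`. Moving the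
first factor `a_{-n}` of `p_{n :: L}` across `H` turns it into `a_n`, whence
`H(p_{n :: L}, p_M) = n m_n(M) H(p_L, p_{M ∖ n})`, and induction gives
`H(p_L, p_M) = z_L` or `0` according as `L` and `M` are permutations of each other or not.
Two non-increasing lists that are permutations of each other are equal.
-/

theorem SortedPartList.perm_iff_eq (l l' : SortedPartList) : l.1.Perm l'.1 ↔ l = l' :=
  ⟨fun h => Subtype.ext (h.eq_of_pairwise' l.2 l'.2), fun h => h ▸ List.Perm.refl _⟩

def zList (L : List ℕ+) : ℕ :=
  ∏ i ∈ L.toFinset, (i : ℕ) ^ L.count i * (L.count i).factorial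

theorem zList_eq_prod_of_subset {L : List ℕ+} {S : Finset ℕ+} (hS : L.toFinset ⊆ S) :
    zList L = ∏ i ∈ S, (i : ℕ) ^ L.count i * (L.count i).factorial :=
  Finset.prod_subset hS fun i _ hi => by
    simp [List.count_eq_zero.2 (fun h => hi (List.mem_toFinset.2 h))]

theorem zList_cons (n : ℕ+) (L : List ℕ+) :
    zList (n :: L) = n * (L.count n + 1) * zList L := by
  have hsub : L.toFinset ⊆ insert n L.toFinset := Finset.subset_insert _ _
  have hn : n ∈ insert n L.toFinset := Finset.mem_insert_self _ _
  rw [zList_eq_prod_of_subset (L := n :: L) (S := insert n L.toFinset) (by simp),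
    zList_eq_prod_of_subset hsub, ← Finset.mul_prod_erase _ _ hn, ← Finset.mul_prod_erase _ _ hn,
    Finset.prod_congr rfl fun i hi => by
      rw [List.count_cons_of_ne (Finset.ne_of_mem_erase hi).symm],
    List.count_cons_self, pow_succ, Nat.factorial_succ]
  ring

section Heisenberg

variable {V : Type*} [AddCommGroup V] [Module ℂ V]

def HeisenbergCommRel (a : ℤ → Module.End ℂ V) : Prop :=
  ∀ m n : ℤ, m ≠ 0 → n ≠ 0 →
    a m ∘ₗ a n - a n ∘ₗ a m = if m = -n then (m : ℂ) • (LinearMap.id : V →ₗ[ℂ] V) else 0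

variable {a : ℤ → Module.End ℂ V}

theorem HeisenbergCommRel.commute_neg (h : HeisenbergCommRel a) (i j : ℕ+) :
    Commute (a (-((i : ℕ) : ℤ))) (a (-((j : ℕ) : ℤ))) := by
  have hij := h (-((i : ℕ) : ℤ)) (-((j : ℕ) : ℤ)) (by simp) (by simp)
  rw [if_neg (by have := i.pos; have := j.pos; omega)] at hij
  exact sub_eq_zero.mp hij

theorem HeisenbergCommRel.apply_apply_neg (h : HeisenbergCommRel a) (n k : ℕ+) (w : V) :
    a n (a (-((k : ℕ) : ℤ)) w)
      = a (-((k : ℕ) : ℤ)) (a n w) + if k = n then ((n : ℕ) : ℂ) • w else 0 := by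
  have hnk := congrArg (· w) (h n (-((k : ℕ) : ℤ)) (by simp) (by simp))
  simp only [LinearMap.sub_apply, LinearMap.comp_apply, neg_neg, Nat.cast_inj,
    PNat.coe_inj, eq_comm (a := n)] at hnk
  split_ifs at hnk ⊢ with hk
  · subst hk
    simp only [LinearMap.smul_apply, LinearMap.id_apply, Int.cast_natCast] at hnk
    rw [← hnk]
    abel
  · rw [add_zero]
    exact sub_eq_zero.mp hnk

variable (a) in
def pList (v : V) (L : List ℕ+) : V :=
  (L.map fun i : ℕ+ => a (-((i : ℕ) : ℤ))).prod v

-- `pPart` elaborates `l.1.map` over `l.1` coerced to `List ℕ` through the list monad.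
theorem pPart_eq_pList (v : V) (l : SortedPartList) : pPart a v l = pList a v l.1 := by
  simp only [pPart, pList, List.pure_def, List.bind_eq_flatMap, ← List.map_eq_flatMap,
    List.map_map]
  rfl

variable {v : V}

@[simp]
theorem pList_nil : pList a v [] = v := rfl

@[simp]
theorem pList_cons (k : ℕ+) (L : List ℕ+) :
    pList a v (k :: L) = a (-((k : ℕ) : ℤ)) (pList a v L) := rfl

theorem HeisenbergCommRel.pList_perm (h : HeisenbergCommRel a) {L M : List ℕ+}
    (hLM : L.Perm M) : pList a v L = pList a v M := by
  rw [pList, (hLM.map _).prod_eq' (List.pairwise_map.2 (List.pairwise_of_forall h.commute_neg)),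
    pList]

theorem HeisenbergCommRel.apply_pList (h : HeisenbergCommRel a)
    (hann : ∀ n : ℤ, 0 < n → a n v = 0) (n : ℕ+) (L : List ℕ+) :
    a n (pList a v L) = ((n : ℕ) * L.count n : ℂ) • pList a v (L.erase n) := by
  induction L with
  | nil => simp [hann _ (by positivity : (0 : ℤ) < (n : ℕ))]
  | cons k L ih =>
    rw [pList_cons, h.apply_apply_neg, ih, map_smul]
    by_cases hk : k = n
    · subst hk
      have hcount : (L.count k : ℂ) • a (-((k : ℕ) : ℤ)) (pList a v (L.erase k))
          = (L.count k : ℂ) • pList a v L := by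
        by_cases hkL : k ∈ L
        · rw [← pList_cons, h.pList_perm (List.perm_cons_erase hkL).symm]
        · simp [List.count_eq_zero.2 hkL]
      rw [if_pos rfl, List.erase_cons_head, List.count_cons_self]
      push_cast
      linear_combination (norm := module) ((k : ℕ) : ℂ) • hcount
    · rw [if_neg hk, add_zero, List.erase_cons_tail (by simpa using hk), List.count_cons_of_ne hk,
        pList_cons]

theorem HeisenbergCommRel.form_pList_pList (h : HeisenbergCommRel a)
    (H : V →ₛₗ[starRingEnd ℂ] V →ₗ[ℂ] ℂ)
    (hadj : ∀ n : ℤ, n ≠ 0 → ∀ x y : V, H (a n x) y = H x (a (-n) y))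
    (hann : ∀ n : ℤ, 0 < n → a n v = 0) (hvv : H v v = 1) (L M : List ℕ+) :
    H (pList a v L) (pList a v M) = if L.Perm M then (zList L : ℂ) else 0 := by
  induction L generalizing M with
  | nil =>
    cases M with
    | nil => simp [zList, hvv]
    | cons k M =>
      rw [pList_cons, ← hadj _ (by simp), pList_nil, hann _ (by simp)]
      simp
  | cons n L ih =>
    calc H (pList a v (n :: L)) (pList a v M)
        = H (pList a v L) (a n (pList a v M)) := by rw [pList_cons, hadj _ (by simp), neg_neg]
      _ = ((n : ℕ) * M.count n : ℂ) * if L.Perm (M.erase n) then (zList L : ℂ) else 0 := by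
        rw [h.apply_pList hann, map_smul, ih, smul_eq_mul]
      _ = if (n :: L).Perm M then (zList (n :: L) : ℂ) else 0 := by
        by_cases hnM : n ∈ M
        · simp only [List.cons_perm_iff_perm_erase, hnM, true_and]
          split_ifs with hL
          · rw [zList_cons, ← (List.cons_perm_iff_perm_erase.2 ⟨hnM, hL⟩).count_eq,
              List.count_cons_self]
            push_cast
            ring
          · simp
        · simp [List.cons_perm_iff_perm_erase, hnM, List.count_eq_zero.2 hnM]

end Heisenberg

/-- if `V` carries a Hermitian (sesquilinear) form `H`, operators `a_n`
with `[a_m, a_n] = m δ_{m,−n} id_V` and `H(a_n x, y) = H(x, a_{−n} y)`, and a vector `v`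
with `a_n v = 0` for `n > 0` and `H(v,v) = 1`, then `H(p_λ, p_μ) = δ_{λμ} z_λ`. -/
theorem pPart_inner_product {V : Type*} [AddCommGroup V] [Module ℂ V]
    (H : V →ₛₗ[starRingEnd ℂ] V →ₗ[ℂ] ℂ)
    (a : ℤ → (V →ₗ[ℂ] V))
    (hcomm : ∀ m n : ℤ, m ≠ 0 → n ≠ 0 →
      a m ∘ₗ a n - a n ∘ₗ a m
        = if m = -n then (m : ℂ) • (LinearMap.id : V →ₗ[ℂ] V) else 0)
    (hadj : ∀ n : ℤ, n ≠ 0 → ∀ x y : V, H (a n x) y = H x (a (-n) y))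
    (v : V) (hann : ∀ n : ℤ, 0 < n → a n v = 0) (hvv : H v v = 1)
    (l l' : SortedPartList) :
    H (pPart a v l) (pPart a v l') = if l = l' then (zPart l : ℂ) else 0 := by
  rw [pPart_eq_pList, pPart_eq_pList, HeisenbergCommRel.form_pList_pList hcomm H hadj hann hvv]
  exact if_congr (SortedPartList.perm_iff_eq l l') rfl rfl
end

section
/- For any partition λ, let v_k(λ) (k ∈ ℤ) be the number of boxes of the Young diagram of λ of residue k. Then Σ_{k∈ℤ} (v_k(λ) − v_{k+1}(λ))² = 2 v_0(λ). Equivalently, for the A_∞ Cartan matrix C (C_{ij} = 2δ_{ij} − δ_{i−1,j} − δ_{i+1,j}), one has 2 v_0(λ) − v(λ)·C v(λ) = 0, so the quiver variety 𝔐(v^λ) is 0-dimensional. -/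
/-!
Row `k` of the diagram contains a box of residue `i` iff `-i ≤ k` and `i < λ_{k+1} - k`.
The numbers `λ_{k+1} - k` strictly decrease, so the number `m_i` of rows with
`i < λ_{k+1} - k` satisfies `m_i - m_{i+1} ∈ {0, 1}`; moreover every row `k < -i` is among
them, whence `v_i = m_i - max(0, -i)`. Hence `v_i - v_{i+1}` lies in `{0, 1}` for `i ≥ 0` and
in `{-1, 0}` for `i < 0`, so its square is its absolute value, and the sum of
`|v_i - v_{i+1}|` telescopes to `v_0` on each half-line.
-/

/-- A partition: a non-increasing, eventually-zero sequence of non-negative integers.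
`part k` is the `(k+1)`-st part `λ_{k+1}`. -/
structure PartitionSeq : Type where
  part : ℕ → ℕ
  mono : ∀ k, part (k + 1) ≤ part k
  ev_zero : ∃ N : ℕ, ∀ k, N ≤ k → part k = 0

namespace PartitionSeq

/-- The Young diagram of a partition: the box `b = (j, k)` in column `j ≥ 0` and row
`k ≥ 0` belongs to the diagram iff `j < λ_{k+1}`. -/
def diagram (lam : PartitionSeq) : Set (ℕ × ℕ) := {b | b.1 < lam.part b.2}

/-- The size `|λ| = Σ_i λ_i` of a partition. -/
noncomputable def size (lam : PartitionSeq) : ℕ := ∑ᶠ k : ℕ, lam.part k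

end PartitionSeq

/-- The residue `j - k` of the box `b = (j, k)`. -/
def boxResidue (b : ℕ × ℕ) : ℤ := (b.1 : ℤ) - (b.2 : ℤ)

/-- `v_i(λ)`: the number of boxes of the Young diagram of `λ` of residue `i`. -/
noncomputable def boxCount (lam : PartitionSeq) (i : ℤ) : ℕ :=
  {b ∈ lam.diagram | boxResidue b = i}.ncard

theorem finsum_sub_add_one_eq_zero {G : Type*} [AddCommGroup G] {f : ℤ → G}
    (hf : f.HasFiniteSupport) : ∑ᶠ i, (f i - f (i + 1)) = 0 := by
  rw [finsum_sub_distrib hf (hf.fun_comp_of_injective (add_left_injective 1)), sub_eq_zero]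
  exact (finsum_comp_equiv (Equiv.addRight 1)).symm

theorem finsum_telescope_to_zero {G : Type*} [AddCommGroup G] {f : ℤ → G}
    (hf : f.HasFiniteSupport) :
    ∑ᶠ i, (if i < 0 then f (i + 1) - f i else f i - f (i + 1)) = 2 • f 0 := by
  -- summation by parts against the sign `i ↦ if i < 0 then -1 else 1`, which jumps only at `-1`
  set h : ℤ → G := fun i => if i < 0 then -f i else f i
  have hh : h.HasFiniteSupport := hf.subset fun i hi => by
    by_cases hi0 : i < 0 <;> simp_all [h]
  have hsplit : ∀ i, (if i < 0 then f (i + 1) - f i else f i - f (i + 1))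
      = (h i - h (i + 1)) + if i = -1 then 2 • f 0 else 0 := by
    intro i
    rcases lt_trichotomy i (-1) with hi | rfl | hi
    · simp [h, hi.trans, show i + 1 < 0 by omega, hi.ne]; abel
    · simp [h, two_nsmul]; abel
    · simp [h, show ¬ i < 0 by omega, show ¬ i + 1 < 0 by omega, hi.ne']
  have hsingle : (fun i : ℤ => if i = -1 then 2 • f 0 else 0).HasFiniteSupport :=
    (Set.finite_singleton (-1 : ℤ)).subset fun i hi => by by_contra h; simp_all
  rw [finsum_congr hsplit, finsum_add_distrib (f := fun i => h i - h (i + 1))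
    (hh.sub (hh.fun_comp_of_injective (add_left_injective 1))) hsingle,
    finsum_sub_add_one_eq_zero hh, finsum_eq_single _ (-1) fun i hi => if_neg hi, if_pos rfl,
    zero_add]

namespace PartitionSeq

variable (lam : PartitionSeq)

theorem part_antitone : Antitone lam.part := antitone_nat_of_succ_le lam.mono

theorem finite_diagram : lam.diagram.Finite := by
  obtain ⟨N, hN⟩ := lam.ev_zero
  refine ((Set.finite_Iio (lam.part 0)).prod (Set.finite_Iio N)).subset fun b hb => ?_
  have hb : b.1 < lam.part b.2 := hb
  refine ⟨hb.trans_le (lam.part_antitone (Nat.zero_le _)), ?_⟩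
  by_contra hbN
  have := hN b.2 (not_lt.mp hbN)
  omega

/-- The rows whose last box has residue at least `i`; the `range` bound is never active. -/
def rowsReaching (i : ℤ) : Finset ℕ :=
  (Finset.range (lam.part 0 - i).toNat).filter fun k => i < (lam.part k : ℤ) - k

variable {lam}

theorem mem_rowsReaching {i : ℤ} {k : ℕ} : k ∈ lam.rowsReaching i ↔ i < (lam.part k : ℤ) - k := by
  have := lam.part_antitone (Nat.zero_le k)
  simp only [rowsReaching, Finset.mem_filter, Finset.mem_range, and_iff_right_iff_imp]
  omega

theorem range_subset_rowsReaching (i : ℤ) : Finset.range (-i).toNat ⊆ lam.rowsReaching i :=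
  fun k hk => mem_rowsReaching.mpr (by simp only [Finset.mem_range] at hk; omega)

theorem rowsReaching_add_one_subset (i : ℤ) : lam.rowsReaching (i + 1) ⊆ lam.rowsReaching i :=
  fun k hk => mem_rowsReaching.mpr (by have := mem_rowsReaching.mp hk; omega)

-- `k ↦ λ_{k+1} - k` is strictly decreasing.
theorem card_rowsReaching_sdiff_add_one_le_one (i : ℤ) :
    (lam.rowsReaching i \ lam.rowsReaching (i + 1)).card ≤ 1 := by
  refine Finset.card_le_one.mpr fun a ha b hb => ?_
  simp only [Finset.mem_sdiff, mem_rowsReaching] at ha hb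
  rcases le_total a b with hab | hab
  · have := lam.part_antitone hab; omega
  · have := lam.part_antitone hab; omega

theorem boxCount_eq_card_rowsReaching_sub (i : ℤ) :
    (boxCount lam i : ℤ) = (lam.rowsReaching i).card - (-i).toNat := by
  have hboxes : {b ∈ lam.diagram | boxResidue b = i} = (fun k : ℕ => ((i + k).toNat, k)) ''
      ↑(lam.rowsReaching i \ Finset.range (-i).toNat) := by
    ext ⟨j, k⟩
    simp only [Set.mem_ofPred_eq, diagram, boxResidue, Set.mem_image, Finset.coe_sdiff,
      Set.mem_sdiff, Finset.mem_coe, mem_rowsReaching, Finset.mem_range, Prod.mk.injEq]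
    constructor
    · rintro ⟨hj, hres⟩
      exact ⟨k, ⟨by omega, by omega⟩, by omega, rfl⟩
    · rintro ⟨k, ⟨hk, hk'⟩, hj, rfl⟩
      omega
  have hinj : Function.Injective fun k : ℕ => ((i + k).toNat, k) :=
    fun a b hab => congrArg Prod.snd hab
  rw [boxCount, hboxes, Set.ncard_image_of_injective _ hinj, Set.ncard_coe_finset,
    Finset.card_sdiff_of_subset (range_subset_rowsReaching i), Finset.card_range,
    Nat.cast_sub (by simpa using Finset.card_le_card (range_subset_rowsReaching (lam := lam) i))]

theorem boxCount_sub_boxCount_add_one (i : ℤ) :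
    (boxCount lam i : ℤ) - boxCount lam (i + 1)
      = (lam.rowsReaching i \ lam.rowsReaching (i + 1)).card - if i < 0 then 1 else 0 := by
  rw [boxCount_eq_card_rowsReaching_sub, boxCount_eq_card_rowsReaching_sub,
    Finset.card_sdiff_of_subset (rowsReaching_add_one_subset i),
    Nat.cast_sub (Finset.card_le_card (rowsReaching_add_one_subset i))]
  split_ifs <;> omega

theorem sq_boxCount_sub_boxCount_add_one (i : ℤ) :
    ((boxCount lam i : ℤ) - boxCount lam (i + 1)) ^ 2
      = if i < 0 then (boxCount lam (i + 1) : ℤ) - boxCount lam i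
        else (boxCount lam i : ℤ) - boxCount lam (i + 1) := by
  have hd := card_rowsReaching_sdiff_add_one_le_one (lam := lam) i
  rw [← neg_sub (boxCount lam i : ℤ), boxCount_sub_boxCount_add_one]
  interval_cases (lam.rowsReaching i \ lam.rowsReaching (i + 1)).card <;> split_ifs <;> norm_num

theorem hasFiniteSupport_boxCount : (fun i => (boxCount lam i : ℤ)).HasFiniteSupport := by
  refine (lam.finite_diagram.image boxResidue).subset fun i hi => ?_
  obtain ⟨b, hb⟩ := Set.nonempty_of_ncard_ne_zero (by simpa [boxCount] using hi)
  exact ⟨b, hb⟩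

end PartitionSeq

open PartitionSeq

/-- for any partition `λ`, `Σ_{k∈ℤ} (v_k(λ) − v_{k+1}(λ))² = 2 v_0(λ)`;
equivalently `2 v_0(λ) − v(λ) · C v(λ) = 0` for the `A_∞` Cartan matrix `C`, so the
quiver variety `𝔐(v^λ)` is 0-dimensional. -/
theorem boxCount_cartan (lam : PartitionSeq) :
    ∑ᶠ i : ℤ, ((boxCount lam i : ℤ) - (boxCount lam (i + 1) : ℤ)) ^ 2
      = 2 * (boxCount lam 0 : ℤ) := by
  rw [finsum_congr sq_boxCount_sub_boxCount_add_one,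
    finsum_telescope_to_zero hasFiniteSupport_boxCount, nsmul_eq_mul, Nat.cast_ofNat]
end

section
/- Let λ be a nonempty partition, let V^λ be the ℂ-vector space with basis the set of boxes of the Young diagram D_λ, graded by residue, and define B_1^λ(b_{j,k}) = b_{j+1,k} and B_{−1}^λ(b_{j,k}) = b_{j,k+1} (interpreted as 0 when the target box is not in D_λ), and ṽ^λ = b_{0,0}. Then B_1^λ B_{−1}^λ = B_{−1}^λ B_1^λ, and the triple is stable: every ℂ-subspace S ⊆ V^λ with B_1^λ(S) ⊆ S, B_{−1}^λ(S) ⊆ S and b_{0,0} ∈ S equals V^λ. -/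
/-- The type of boxes of the Young diagram of `lam`. -/
def BoxOf (lam : PartitionSeq) : Type := {b : ℕ × ℕ // b.1 < lam.part b.2}

/-- `V^λ`: the free `ℂ`-vector space on the boxes of the Young diagram of `lam`,
graded by residue. -/
abbrev YoungSpace (lam : PartitionSeq) : Type := BoxOf lam →₀ ℂ

/-- `B_1^λ`: the degree `+1` endomorphism `b_{j,k} ↦ b_{j+1,k}` (and `0` if the target
box is not in the diagram). -/
noncomputable def YB1 (lam : PartitionSeq) : YoungSpace lam →ₗ[ℂ] YoungSpace lam :=
  Finsupp.lift (YoungSpace lam) ℂ (BoxOf lam) fun b =>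
    if h : b.1.1 + 1 < lam.part b.1.2 then Finsupp.single ⟨(b.1.1 + 1, b.1.2), h⟩ 1 else 0

/-- `B_{-1}^λ`: the degree `-1` endomorphism `b_{j,k} ↦ b_{j,k+1}` (and `0` if the target
box is not in the diagram). -/
noncomputable def YBm1 (lam : PartitionSeq) : YoungSpace lam →ₗ[ℂ] YoungSpace lam :=
  Finsupp.lift (YoungSpace lam) ℂ (BoxOf lam) fun b =>
    if h : b.1.1 < lam.part (b.1.2 + 1) then Finsupp.single ⟨(b.1.1, b.1.2 + 1), h⟩ 1 else 0

section

variable {lam : PartitionSeq}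

noncomputable def boxVec {j k : ℕ} (hb : j < lam.part k) : YoungSpace lam :=
  Finsupp.single ⟨(j, k), hb⟩ 1

lemma YB1_boxVec {j k : ℕ} (hb : j < lam.part k) :
    YB1 lam (boxVec hb) = if h : j + 1 < lam.part k then boxVec h else 0 := by
  rw [YB1, Finsupp.lift_apply]
  -- `erw`: the `single` inside `YB1` is indexed by the subtype underlying `BoxOf lam`
  erw [Finsupp.sum_single_index] <;> simp [boxVec]

lemma YBm1_boxVec {j k : ℕ} (hb : j < lam.part k) :
    YBm1 lam (boxVec hb) = if h : j < lam.part (k + 1) then boxVec h else 0 := by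
  rw [YBm1, Finsupp.lift_apply]
  erw [Finsupp.sum_single_index] <;> simp [boxVec]

lemma YB1_YBm1_boxVec {j k : ℕ} (hb : j < lam.part k) :
    YB1 lam (YBm1 lam (boxVec hb)) = if h : j + 1 < lam.part (k + 1) then boxVec h else 0 := by
  by_cases hm : j < lam.part (k + 1)
  · rw [YBm1_boxVec, dif_pos hm, YB1_boxVec]
  · rw [YBm1_boxVec, dif_neg hm, map_zero, dif_neg (by omega)]

lemma YBm1_YB1_boxVec {j k : ℕ} (hb : j < lam.part k) :
    YBm1 lam (YB1 lam (boxVec hb)) = if h : j + 1 < lam.part (k + 1) then boxVec h else 0 := by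
  by_cases hp : j + 1 < lam.part k
  · rw [YB1_boxVec, dif_pos hp, YBm1_boxVec]
  · rw [YB1_boxVec, dif_neg hp, map_zero, dif_neg fun h => hp (h.trans_le (lam.mono k))]

theorem YB1_comp_YBm1 (lam : PartitionSeq) : YB1 lam ∘ₗ YBm1 lam = YBm1 lam ∘ₗ YB1 lam := by
  ext ⟨⟨j, k⟩, hb⟩ : 2
  exact (YB1_YBm1_boxVec hb).trans (YBm1_YB1_boxVec hb).symm

theorem boxVec_mem_of_invariant {S : Submodule ℂ (YoungSpace lam)}
    (hS1 : ∀ x ∈ S, YB1 lam x ∈ S) (hSm1 : ∀ x ∈ S, YBm1 lam x ∈ S)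
    {h0 : 0 < lam.part 0} (h00 : boxVec h0 ∈ S) {j k : ℕ} (hb : j < lam.part k) :
    boxVec hb ∈ S := by
  have first_column : ∀ k (h : 0 < lam.part k), boxVec h ∈ S := by
    intro k
    induction k with
    | zero => exact fun _ => h00
    | succ k ih =>
      intro h
      have hk := hSm1 _ (ih (h.trans_le (lam.mono k)))
      rwa [YBm1_boxVec, dif_pos h] at hk
  induction j with
  | zero => exact first_column k hb
  | succ j ih =>
    have hj := hS1 _ (ih (Nat.lt_of_succ_lt hb))
    rwa [YB1_boxVec, dif_pos hb] at hj

theorem eq_top_of_invariant {S : Submodule ℂ (YoungSpace lam)}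
    (hS1 : ∀ x ∈ S, YB1 lam x ∈ S) (hSm1 : ∀ x ∈ S, YBm1 lam x ∈ S)
    {h0 : 0 < lam.part 0} (h00 : boxVec h0 ∈ S) : S = ⊤ := by
  rw [eq_top_iff, ← Finsupp.basisSingleOne.span_eq, Submodule.span_le, Finsupp.coe_basisSingleOne]
  rintro _ ⟨⟨⟨j, k⟩, hb⟩, rfl⟩
  exact boxVec_mem_of_invariant hS1 hSm1 h00 hb

end

/-- for a nonempty partition `λ`, the operators `B_1^λ` and `B_{-1}^λ` on
`V^λ` commute, and the triple `(B_1^λ, B_{-1}^λ, b_{0,0})` is stable: every subspace of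
`V^λ` invariant under both operators and containing `b_{0,0}` is all of `V^λ`. -/
theorem young_triple_stable (lam : PartitionSeq) (h0 : 0 < lam.part 0) :
    YB1 lam ∘ₗ YBm1 lam = YBm1 lam ∘ₗ YB1 lam ∧
    (∀ S : Submodule ℂ (YoungSpace lam),
      (∀ x ∈ S, YB1 lam x ∈ S) → (∀ x ∈ S, YBm1 lam x ∈ S) →
      Finsupp.single (⟨(0, 0), h0⟩ : BoxOf lam) 1 ∈ S → S = ⊤) :=
  ⟨YB1_comp_YBm1 lam, fun _ hS1 hSm1 h00 => eq_top_of_invariant hS1 hSm1 h00⟩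
end
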